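/- arXiv:1806.00686 — 9 statements merged into one kernel-verified Lean document; each statement's English description precedes it below -/
import Mathlib

section
/- Suppose (β,α) ∈ H ∩ H1 with β, α ≠ 0. Then the function y ↦ [(β,α), y] is Y-harmonic on all of ℤ × ℤ≥0, i.e., (P[(β,α),·])(y) = [(β,α), y] for every y ∈ ℤ × ℤ≥0. -/
noncomputable section

/-- One step of the walk constrained only on the second coordinate:
`π₁(y,v) = v` if `y + v ∈ ℤ × ℤ≥0`, and `0` otherwise. -/
def stepY (p v : ℤ × ℤ) : ℤ × ℤ := if 0 ≤ (p + v).2 then p + v else p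

/-- The one-step operator `P` of the walk `Y`. -/
def Pop (l1 m1 l2 m2 : ℝ) (h : ℤ × ℤ → ℂ) (y : ℤ × ℤ) : ℂ :=
  (l1 : ℂ) * h (stepY y (-1, 0)) + (m1 : ℂ) * h (stepY y (1, 0)) +
    (l2 : ℂ) * h (stepY y (0, 1)) + (m2 : ℂ) * h (stepY y (0, -1))

/-- `[(β,α), y] = β^(y(1)-y(2)) · α^(y(2))`. -/
def brkt (β α : ℂ) (y : ℤ × ℤ) : ℂ := β ^ (y.1 - y.2) * α ^ y.2

/-- The interior characteristic polynomial of `Y`. -/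
def pchar (l1 m1 l2 m2 : ℝ) (β α : ℂ) : ℂ :=
  (l1 : ℂ) / β + (m1 : ℂ) * β + (l2 : ℂ) * α / β + (m2 : ℂ) * β / α

/-- The characteristic polynomial of `Y` on the boundary `∂₁`. -/
def p1char (l1 m1 l2 m2 : ℝ) (β α : ℂ) : ℂ :=
  (l1 : ℂ) / β + (m1 : ℂ) * β + (l2 : ℂ) * α / β + (m2 : ℂ)
theorem stmt1 (l1 m1 l2 m2 : ℝ)
    (hl1 : 0 < l1) (hm1 : 0 < m1) (hl2 : 0 < l2) (hm2 : 0 < m2)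
    (hsum : l1 + l2 + m1 + m2 = 1)
    (hρ1 : l1 / m1 < 1) (hρ2 : l2 / m2 < 1)
    (hord1 : l2 / m2 ≤ (l1 + l2) / (m1 + m2))
    (hord2 : (l1 + l2) / (m1 + m2) ≤ l1 / m1)
    (β α : ℂ) (hβ : β ≠ 0) (hα : α ≠ 0)
    (hH : pchar l1 m1 l2 m2 β α = 1) (hH1 : p1char l1 m1 l2 m2 β α = 1) :
    ∀ y : ℤ × ℤ, 0 ≤ y.2 →
      Pop l1 m1 l2 m2 (brkt β α) y = brkt β α y := by

  intro y hy
  rcases y with ⟨a, b⟩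
  simp only [Prod.mk.injEq] at *
  rcases lt_or_eq_of_le hy with hb | hb
  · -- interior case: 0 < b
    have hs1 : stepY (a, b) (-1, 0) = (a - 1, b) := by
      unfold stepY; rw [if_pos (by simp; omega)]; simp [Prod.ext_iff]; omega
    have hs2 : stepY (a, b) (1, 0) = (a + 1, b) := by
      unfold stepY; rw [if_pos (by simp; omega)]; simp [Prod.ext_iff]
    have hs3 : stepY (a, b) (0, 1) = (a, b + 1) := by
      unfold stepY; rw [if_pos (by simp; omega)]; simp [Prod.ext_iff]
    have hs4 : stepY (a, b) (0, -1) = (a, b - 1) := by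
      unfold stepY; rw [if_pos (by simp; omega)]; simp [Prod.ext_iff]; omega
    have key : Pop l1 m1 l2 m2 (brkt β α) (a, b)
        = brkt β α (a, b) * pchar l1 m1 l2 m2 β α := by
      rw [Pop, hs1, hs2, hs3, hs4]
      simp only [brkt, pchar]
      have e1 : β ^ (a - 1 - b) = β ^ (a - b) * β⁻¹ := by
        rw [show a - 1 - b = (a - b) + (-1) by ring, zpow_add₀ hβ, zpow_neg_one]
      have e2 : β ^ (a + 1 - b) = β ^ (a - b) * β := by
        rw [show a + 1 - b = (a - b) + 1 by ring, zpow_add₀ hβ, zpow_one]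
      have e3 : β ^ (a - (b + 1)) = β ^ (a - b) * β⁻¹ := by
        rw [show a - (b + 1) = (a - b) + (-1) by ring, zpow_add₀ hβ, zpow_neg_one]
      have e4 : α ^ (b + 1) = α ^ b * α := by
        rw [zpow_add₀ hα, zpow_one]
      have e5 : β ^ (a - (b - 1)) = β ^ (a - b) * β := by
        rw [show a - (b - 1) = (a - b) + 1 by ring, zpow_add₀ hβ, zpow_one]
      have e6 : α ^ (b - 1) = α ^ b * α⁻¹ := by
        rw [show b - 1 = b + (-1) by ring, zpow_add₀ hα, zpow_neg_one]
      rw [e1, e2, e3, e4, e5, e6]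
      field_simp
    rw [key, hH, mul_one]
  · -- boundary case: b = 0
    subst hb
    have hs1 : stepY (a, 0) (-1, 0) = (a - 1, 0) := by
      unfold stepY; rw [if_pos (by simp)]; simp [Prod.ext_iff]; omega
    have hs2 : stepY (a, 0) (1, 0) = (a + 1, 0) := by
      unfold stepY; rw [if_pos (by simp)]; simp [Prod.ext_iff]
    have hs3 : stepY (a, 0) (0, 1) = (a, 1) := by
      unfold stepY; rw [if_pos (by simp)]; simp [Prod.ext_iff]
    have hs4 : stepY (a, 0) (0, -1) = (a, 0) := by
      unfold stepY; rw [if_neg (by simp)]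
    have key : Pop l1 m1 l2 m2 (brkt β α) (a, 0)
        = brkt β α (a, 0) * p1char l1 m1 l2 m2 β α := by
      rw [Pop, hs1, hs2, hs3, hs4]
      simp only [brkt, p1char, sub_zero, zpow_zero, mul_one]
      have e1 : β ^ (a - 1) = β ^ a * β⁻¹ := by
        rw [show a - 1 = a + (-1) by ring, zpow_add₀ hβ, zpow_neg_one]
      have e2 : β ^ (a + 1) = β ^ a * β := by
        rw [zpow_add₀ hβ, zpow_one]
      rw [e1, e2]
      field_simp
    rw [key, hH1, mul_one]
end
end

section
/- Let β, α1, α2 ∈ ℂ \ {0} with α1 ≠ α2, (β,α1) ∈ H, (β,α2) ∈ H and α2 = β²/(α1·ρ2) (so (β,α1) and (β,α2) are conjugate points on H). Then the function h_β(y) = C(β,α2)·[(β,α1), y] − C(β,α1)·[(β,α2), y] is Y-harmonic on all of ℤ × ℤ≥0, where C(β,α) = 1 − β/α. -/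
noncomputable section

lemma brkt_left (β α : ℂ) (hβ : β ≠ 0) (y : ℤ × ℤ) :
    brkt β α (y.1 + -1, y.2 + 0) = brkt β α y / β := by
  simp only [brkt, add_zero]
  rw [show y.1 + -1 - y.2 = (y.1 - y.2) + (-1) by ring, zpow_add₀ hβ]
  rw [zpow_neg, zpow_one]
  field_simp

lemma brkt_right (β α : ℂ) (hβ : β ≠ 0) (y : ℤ × ℤ) :
    brkt β α (y.1 + 1, y.2 + 0) = brkt β α y * β := by
  simp only [brkt, add_zero]
  rw [show y.1 + 1 - y.2 = (y.1 - y.2) + 1 by ring, zpow_add₀ hβ, zpow_one]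
  ring

lemma brkt_up (β α : ℂ) (hβ : β ≠ 0) (hα : α ≠ 0) (y : ℤ × ℤ) :
    brkt β α (y.1 + 0, y.2 + 1) = brkt β α y * α / β := by
  simp only [brkt, add_zero]
  rw [show y.1 - (y.2 + 1) = (y.1 - y.2) + (-1) by ring, zpow_add₀ hβ,
    zpow_add₀ hα, zpow_one]
  rw [zpow_neg, zpow_one]
  field_simp

lemma brkt_down (β α : ℂ) (hβ : β ≠ 0) (hα : α ≠ 0) (y : ℤ × ℤ) :
    brkt β α (y.1 + 0, y.2 + -1) = brkt β α y * β / α := by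
  simp only [brkt, add_zero]
  rw [show y.1 - (y.2 + -1) = (y.1 - y.2) + 1 by ring, zpow_add₀ hβ,
    show y.2 + -1 = y.2 + (-1) by ring, zpow_add₀ hα, zpow_one]
  rw [zpow_neg, zpow_one]
  field_simp

lemma Pop_brkt_interior (l1 m1 l2 m2 : ℝ) (β α : ℂ) (hβ : β ≠ 0) (hα : α ≠ 0)
    (y : ℤ × ℤ) (hy : 1 ≤ y.2) :
    Pop l1 m1 l2 m2 (brkt β α) y = pchar l1 m1 l2 m2 β α * brkt β α y := by
  have h1 : (0:ℤ) ≤ y.2 + 0 := by omega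
  have h2 : (0:ℤ) ≤ y.2 + 1 := by omega
  have h3 : (0:ℤ) ≤ y.2 + -1 := by omega
  simp only [Pop, stepY, Prod.mk_add_mk, Prod.snd_add, Prod.fst_add, Prod.add_def,
    if_pos h1, if_pos h2, if_pos h3]
  rw [brkt_left β α hβ, brkt_right β α hβ, brkt_up β α hβ hα, brkt_down β α hβ hα,
    pchar]
  field_simp

lemma Pop_brkt_boundary (l1 m1 l2 m2 : ℝ) (β α : ℂ) (hβ : β ≠ 0) (hα : α ≠ 0)
    (y : ℤ × ℤ) (hy : y.2 = 0) :
    Pop l1 m1 l2 m2 (brkt β α) y = p1char l1 m1 l2 m2 β α * brkt β α y := by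
  have h1 : (0:ℤ) ≤ y.2 + 0 := by omega
  have h2 : (0:ℤ) ≤ y.2 + 1 := by omega
  have h3 : ¬ (0:ℤ) ≤ y.2 + -1 := by omega
  simp only [Pop, stepY, Prod.mk_add_mk, Prod.snd_add, Prod.fst_add, Prod.add_def,
    if_pos h1, if_pos h2, if_neg h3]
  rw [brkt_left β α hβ, brkt_right β α hβ, brkt_up β α hβ hα, p1char]
  field_simp

lemma Pop_lin (l1 m1 l2 m2 : ℝ) (c1 c2 : ℂ) (f g : ℤ × ℤ → ℂ) (y : ℤ × ℤ) :
    Pop l1 m1 l2 m2 (fun w => c1 * f w - c2 * g w) y =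
      c1 * Pop l1 m1 l2 m2 f y - c2 * Pop l1 m1 l2 m2 g y := by
  simp only [Pop]; ring

theorem stmt2 (l1 m1 l2 m2 : ℝ)
    (hl1 : 0 < l1) (hm1 : 0 < m1) (hl2 : 0 < l2) (hm2 : 0 < m2)
    (hsum : l1 + l2 + m1 + m2 = 1)
    (hρ1 : l1 / m1 < 1) (hρ2 : l2 / m2 < 1)
    (hord1 : l2 / m2 ≤ (l1 + l2) / (m1 + m2))
    (hord2 : (l1 + l2) / (m1 + m2) ≤ l1 / m1)
    (β α1 α2 : ℂ) (hβ : β ≠ 0) (hα1 : α1 ≠ 0) (hα2 : α2 ≠ 0) (hne : α1 ≠ α2)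
    (hH1 : pchar l1 m1 l2 m2 β α1 = 1) (hH2 : pchar l1 m1 l2 m2 β α2 = 1)
    (hconj : α2 = β ^ 2 / (α1 * ((l2 / m2 : ℝ) : ℂ))) :
    ∀ y : ℤ × ℤ, 0 ≤ y.2 →
      Pop l1 m1 l2 m2
        (fun w => (1 - β / α2) * brkt β α1 w - (1 - β / α1) * brkt β α2 w) y =
        (1 - β / α2) * brkt β α1 y - (1 - β / α1) * brkt β α2 y := by
  intro y hy
  rw [Pop_lin]
  rcases eq_or_lt_of_le hy with hb | hi
  · -- boundary: y.2 = 0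
    have hy0 : y.2 = 0 := hb.symm
    rw [Pop_brkt_boundary l1 m1 l2 m2 β α1 hβ hα1 y hy0,
      Pop_brkt_boundary l1 m1 l2 m2 β α2 hβ hα2 y hy0]
    have e1 : p1char l1 m1 l2 m2 β α1 =
        pchar l1 m1 l2 m2 β α1 + (m2:ℂ) * (1 - β / α1) := by
      simp only [p1char, pchar]; ring
    have e2 : p1char l1 m1 l2 m2 β α2 =
        pchar l1 m1 l2 m2 β α2 + (m2:ℂ) * (1 - β / α2) := by
      simp only [p1char, pchar]; ring
    have eb : brkt β α1 y = brkt β α2 y := by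
      simp [brkt, hy0]
    rw [e1, e2, hH1, hH2, eb]
    ring
  · -- interior: 1 ≤ y.2
    have hy1 : 1 ≤ y.2 := hi
    rw [Pop_brkt_interior l1 m1 l2 m2 β α1 hβ hα1 y hy1,
      Pop_brkt_interior l1 m1 l2 m2 β α2 hβ hα2 y hy1, hH1, hH2]
    ring
end
end

section
/- Let z ∈ ℂ, z ≠ 0, and suppose (β,α) ∈ H^z ∩ H1^z with β, α ≠ 0. Then the function y ↦ [(β,α), y] is Y-z-harmonic on all of ℤ × ℤ≥0, i.e., z·(P[(β,α),·])(y) = [(β,α), y] for every y ∈ ℤ × ℤ≥0. -/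
noncomputable section

/-! `y ↦ [(β,α), y]` is a character of `ℤ × ℤ`, so each unconstrained step multiplies it by the
value of the character at the step; summing gives `p(β,α)` in the interior, while on the line
`y(2) = 0` the blocked downward step contributes `μ₂` instead of `μ₂ β/α`, giving `p₁(β,α)`. -/

lemma stepY_of_nonneg {p v : ℤ × ℤ} (h : 0 ≤ p.2 + v.2) : stepY p v = p + v := if_pos h

lemma stepY_of_neg {p v : ℤ × ℤ} (h : p.2 + v.2 < 0) : stepY p v = p := if_neg h.not_ge

section Character

variable {β α : ℂ}

lemma brkt_add (hβ : β ≠ 0) (hα : α ≠ 0) (p q : ℤ × ℤ) :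
    brkt β α (p + q) = brkt β α p * brkt β α q := by
  simp only [brkt, Prod.fst_add, Prod.snd_add, add_sub_add_comm, zpow_add₀ hβ, zpow_add₀ hα]
  ring

variable (l1 m1 l2 m2 : ℝ) {y : ℤ × ℤ}

lemma Pop_brkt_of_pos (hβ : β ≠ 0) (hα : α ≠ 0) (hy : 0 < y.2) :
    Pop l1 m1 l2 m2 (brkt β α) y = pchar l1 m1 l2 m2 β α * brkt β α y := by
  simp (disch := (norm_num; omega)) only [Pop, stepY_of_nonneg, brkt_add hβ hα]
  simp [brkt, pchar]
  ring

lemma Pop_brkt_of_eq_zero (hβ : β ≠ 0) (hα : α ≠ 0) (hy : y.2 = 0) :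
    Pop l1 m1 l2 m2 (brkt β α) y = p1char l1 m1 l2 m2 β α * brkt β α y := by
  rw [Pop, stepY_of_neg (v := (0, -1)) (by norm_num; omega)]
  simp (disch := (norm_num; omega)) only [stepY_of_nonneg, brkt_add hβ hα]
  simp [brkt, p1char]
  ring

end Character

theorem stmt4_general (l1 m1 l2 m2 : ℝ)
    (z : ℂ)
    (β α : ℂ) (hβ : β ≠ 0) (hα : α ≠ 0)
    (hH : z * pchar l1 m1 l2 m2 β α = 1)
    (hH1 : z * p1char l1 m1 l2 m2 β α = 1) :
    ∀ y : ℤ × ℤ, 0 ≤ y.2 →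
      z * Pop l1 m1 l2 m2 (brkt β α) y = brkt β α y := by
  intro y hy
  rcases hy.eq_or_lt with hy | hy
  · rw [Pop_brkt_of_eq_zero l1 m1 l2 m2 hβ hα hy.symm, ← mul_assoc, hH1, one_mul]
  · rw [Pop_brkt_of_pos l1 m1 l2 m2 hβ hα hy, ← mul_assoc, hH, one_mul]

theorem stmt4 (l1 m1 l2 m2 : ℝ)
    (hl1 : 0 < l1) (hm1 : 0 < m1) (hl2 : 0 < l2) (hm2 : 0 < m2)
    (hsum : l1 + l2 + m1 + m2 = 1)
    (hρ1 : l1 / m1 < 1) (hρ2 : l2 / m2 < 1)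
    (hord1 : l2 / m2 ≤ (l1 + l2) / (m1 + m2))
    (hord2 : (l1 + l2) / (m1 + m2) ≤ l1 / m1)
    (z : ℂ) (hz : z ≠ 0)
    (β α : ℂ) (hβ : β ≠ 0) (hα : α ≠ 0)
    (hH : z * pchar l1 m1 l2 m2 β α = 1)
    (hH1 : z * p1char l1 m1 l2 m2 β α = 1) :
    ∀ y : ℤ × ℤ, 0 ≤ y.2 →
      z * Pop l1 m1 l2 m2 (brkt β α) y = brkt β α y :=
  stmt4_general l1 m1 l2 m2 z β α hβ hα hH hH1
end
end

section
/- Let z ∈ ℂ, z ≠ 0, and let β, α1, α2 ∈ ℂ \ {0} with α1 ≠ α2, (β,α1) ∈ H^z, (β,α2) ∈ H^z and α2 = β²/(α1·ρ2) (conjugate points on H^z). Then the function h_{z,β}(y) = C_z(β,α2)·[(β,α1), y] − C_z(β,α1)·[(β,α2), y] is Y-z-harmonic on all of ℤ × ℤ≥0, where C_z(β,α) = z·(1 − β/α). -/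
noncomputable section

lemma brkt_shift (β α : ℂ) (hβ : β ≠ 0) (hα : α ≠ 0) (a b i j : ℤ) :
    brkt β α (a + i, b + j) = brkt β α (a, b) * β ^ (i - j) * α ^ j := by
  have h : (a + i) - (b + j) = (a - b) + (i - j) := by ring
  simp only [brkt, h, zpow_add₀ hβ, zpow_add₀ hα]
  ring

lemma Pop_brkt_int (l1 m1 l2 m2 : ℝ) (β α : ℂ) (hβ : β ≠ 0) (hα : α ≠ 0)
    (a b : ℤ) (hb : 1 ≤ b) :
    Pop l1 m1 l2 m2 (brkt β α) (a, b) = pchar l1 m1 l2 m2 β α * brkt β α (a, b) := by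
  have c1 : (0:ℤ) ≤ b + 0 := by omega
  have c2 : (0:ℤ) ≤ b + 1 := by omega
  have c3 : (0:ℤ) ≤ b + -1 := by omega
  simp only [Pop, stepY, Prod.mk_add_mk, c1, c2, c3, if_pos]
  rw [brkt_shift β α hβ hα, brkt_shift β α hβ hα, brkt_shift β α hβ hα,
    brkt_shift β α hβ hα]
  simp only [pchar]
  norm_num [zpow_neg, zpow_one]
  ring

lemma Pop_brkt_bd (l1 m1 l2 m2 : ℝ) (β α : ℂ) (hβ : β ≠ 0) (hα : α ≠ 0) (a : ℤ) :
    Pop l1 m1 l2 m2 (brkt β α) (a, 0) = p1char l1 m1 l2 m2 β α * brkt β α (a, 0) := by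
  have c1 : (0:ℤ) ≤ 0 + 0 := by omega
  have c2 : (0:ℤ) ≤ 0 + 1 := by omega
  have c3 : ¬ (0:ℤ) ≤ 0 + -1 := by omega
  simp only [Pop, stepY, Prod.mk_add_mk, c1, c2, c3, if_pos, if_neg, not_false_iff]
  rw [brkt_shift β α hβ hα, brkt_shift β α hβ hα, brkt_shift β α hβ hα]
  simp only [p1char]
  norm_num [zpow_neg, zpow_one]
  ring

lemma Pop_comb (l1 m1 l2 m2 : ℝ) (c d : ℂ) (f g : ℤ × ℤ → ℂ) (y : ℤ × ℤ) :
    Pop l1 m1 l2 m2 (fun w => c * f w - d * g w) y =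
      c * Pop l1 m1 l2 m2 f y - d * Pop l1 m1 l2 m2 g y := by
  simp only [Pop]; ring

theorem stmt5 (l1 m1 l2 m2 : ℝ)
    (hl1 : 0 < l1) (hm1 : 0 < m1) (hl2 : 0 < l2) (hm2 : 0 < m2)
    (hsum : l1 + l2 + m1 + m2 = 1)
    (hρ1 : l1 / m1 < 1) (hρ2 : l2 / m2 < 1)
    (hord1 : l2 / m2 ≤ (l1 + l2) / (m1 + m2))
    (hord2 : (l1 + l2) / (m1 + m2) ≤ l1 / m1)
    (z : ℂ) (hz : z ≠ 0)
    (β α1 α2 : ℂ) (hβ : β ≠ 0) (hα1 : α1 ≠ 0) (hα2 : α2 ≠ 0) (hne : α1 ≠ α2)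
    (hH1 : z * pchar l1 m1 l2 m2 β α1 = 1) (hH2 : z * pchar l1 m1 l2 m2 β α2 = 1)
    (hconj : α2 = β ^ 2 / (α1 * ((l2 / m2 : ℝ) : ℂ))) :
    ∀ y : ℤ × ℤ, 0 ≤ y.2 →
      z * Pop l1 m1 l2 m2
        (fun w => z * (1 - β / α2) * brkt β α1 w - z * (1 - β / α1) * brkt β α2 w) y =
        z * (1 - β / α2) * brkt β α1 y - z * (1 - β / α1) * brkt β α2 y := by
  rintro ⟨a, b⟩ hb
  rw [Pop_comb]
  rcases eq_or_lt_of_le hb with h0 | h1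
  · -- boundary case b = 0
    obtain rfl : b = 0 := h0.symm
    rw [Pop_brkt_bd l1 m1 l2 m2 β α1 hβ hα1, Pop_brkt_bd l1 m1 l2 m2 β α2 hβ hα2]
    have e1 : p1char l1 m1 l2 m2 β α1 = pchar l1 m1 l2 m2 β α1 + m2 * (1 - β / α1) := by
      simp only [p1char, pchar]
      field_simp
      ring
    have e2 : p1char l1 m1 l2 m2 β α2 = pchar l1 m1 l2 m2 β α2 + m2 * (1 - β / α2) := by
      simp only [p1char, pchar]
      field_simp
      ring
    have eB : brkt β α1 (a, 0) = brkt β α2 (a, 0) := by simp [brkt]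
    rw [e1, e2, eB]
    linear_combination (z * (1 - β / α2) * brkt β α2 (a, 0)) * hH1 -
      (z * (1 - β / α1) * brkt β α2 (a, 0)) * hH2
  · -- interior case 1 ≤ b
    rw [Pop_brkt_int l1 m1 l2 m2 β α1 hβ hα1 a b h1,
      Pop_brkt_int l1 m1 l2 m2 β α2 hβ hα2 a b h1]
    linear_combination (z * (1 - β / α2) * brkt β α1 (a, b)) * hH1 -
      (z * (1 - β / α1) * brkt β α2 (a, b)) * hH2
end
end

section
/- There exist z0 > 1 and a constant C1 > 0 such that E_y[ z0^τ · 1_{τ < ∞} ] < C1 for every y ∈ ℤ × ℤ≥0 with y(1) ≥ y(2). -/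
open MeasureTheory ProbabilityTheory Filter

noncomputable section

/-- One step of the walk constrained to the nonnegative quadrant:
`π(x,v) = v` if `x + v ∈ ℤ≥0²`, and `0` otherwise. -/
def stepX (p v : ℤ × ℤ) : ℤ × ℤ :=
  if 0 ≤ (p + v).1 ∧ 0 ≤ (p + v).2 then p + v else p

/-- Path of the constrained walk `X` driven by the increments `inc`:
`X_0 = x`, `X_{k+1} = X_k + π(X_k, inc_{k+1})`. -/
def pathX (x : ℤ × ℤ) (inc : ℕ → ℤ × ℤ) : ℕ → ℤ × ℤ
  | 0 => x
  | k + 1 => stepX (pathX x inc k) (inc (k + 1))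

/-- Path of the walk `Y`, constrained only on the second coordinate, and with
the first coordinate of each increment reversed:
`Y_0 = y`, `Y_{k+1} = Y_k + π₁(Y_k, 𝕀·inc_{k+1})` where `𝕀(v1,v2) = (−v1,v2)`. -/
def pathY (y : ℤ × ℤ) (inc : ℕ → ℤ × ℤ) : ℕ → ℤ × ℤ
  | 0 => y
  | k + 1 => stepY (pathY y inc k) (-(inc (k + 1)).1, (inc (k + 1)).2)

/-- Hitting time of the set `A` by the path `p`, as an extended natural
number (`⊤` if the set is never hit). -/
def hitTime (A : Set (ℤ × ℤ)) (p : ℕ → ℤ × ℤ) : ℕ∞ :=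
  sInf ((fun n : ℕ => (n : ℕ∞)) '' {n : ℕ | p n ∈ A})

/-- `τ_n`: first time the constrained walk `X` started at `x` hits
`{x : x(1) + x(2) = n}`. -/
def tauN (n : ℤ) (x : ℤ × ℤ) (inc : ℕ → ℤ × ℤ) : ℕ∞ :=
  hitTime {p | p.1 + p.2 = n} (pathX x inc)

/-- `τ_0`: first time the constrained walk `X` started at `x` hits the origin. -/
def tau0 (x : ℤ × ℤ) (inc : ℕ → ℤ × ℤ) : ℕ∞ :=
  hitTime {((0 : ℤ), (0 : ℤ))} (pathX x inc)

/-- `τ`: first time the walk `Y` started at `y` hits `{y : y(1) = y(2)}`. -/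
def tauY (y : ℤ × ℤ) (inc : ℕ → ℤ × ℤ) : ℕ∞ :=
  hitTime {p | p.1 = p.2} (pathY y inc)

/-- `I` is an i.i.d. sequence of `ℤ²`-valued random variables with
`P(I_k = (1,0)) = λ1`, `P(I_k = (−1,0)) = μ1`, `P(I_k = (0,1)) = λ2`,
`P(I_k = (0,−1)) = μ2`. -/
def IncrementsLaw (l1 m1 l2 m2 : ℝ) {Ω : Type} [MeasurableSpace Ω]
    (μ : Measure Ω) (I : ℕ → Ω → ℤ × ℤ) : Prop :=
  (∀ k, Measurable (I k)) ∧
    iIndepFun I μ ∧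
    ∀ k, μ (I k ⁻¹' {(1, 0)}) = ENNReal.ofReal l1 ∧
      μ (I k ⁻¹' {(-1, 0)}) = ENNReal.ofReal m1 ∧
      μ (I k ⁻¹' {(0, 1)}) = ENNReal.ofReal l2 ∧
      μ (I k ⁻¹' {(0, -1)}) = ENNReal.ofReal m2

/-!
For `ρ₁ < a < 1` the function `g y = a ^ (y.1 - y.2) + K * a ^ y.1` is a Lyapunov function for the
walk `Y` on the wedge `0 ≤ y.2 ≤ y.1`: for some `z > 1` and `K ≥ 0`, `z · E_y[g(Y₁)] ≤ g y` off the
diagonal. Away from the boundary `y.2 = 0` both summands contract, the first because `a > r` and the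
second because `a > ρ₁`; on the boundary the first summand may grow, and the strictly contracting
second summand absorbs this once `K` is large. So `z ^ n g(Yₙ)` stopped at `τ` is a
supermartingale, and as `g ≥ 1` on the diagonal, `E_y[z ^ τ; τ < ∞] ≤ g y ≤ 1 + K`. The
supermartingale inequality is proved by induction on a truncation level of `τ`, splitting off the
first increment, which is independent of all later ones.
-/

open scoped ENNReal

section HittingTime

variable {A : Set (ℤ × ℤ)} {p : ℕ → ℤ × ℤ}

lemma hitTime_eq_find [DecidablePred (fun n => p n ∈ A)] (h : ∃ n, p n ∈ A) :
    hitTime A p = Nat.find h := by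
  refine le_antisymm (sInf_le ⟨_, Nat.find_spec h, rfl⟩) (le_sInf ?_)
  rintro _ ⟨n, hn, rfl⟩
  exact Nat.cast_le.mpr (Nat.find_min' h hn)

lemma hitTime_eq_top (h : ∀ n, p n ∉ A) : hitTime A p = ⊤ := by
  simp [hitTime, h]

lemma hitTime_eq_zero (h : p 0 ∈ A) : hitTime A p = 0 :=
  nonpos_iff_eq_zero.mp (sInf_le ⟨0, h, rfl⟩)

lemma hitTime_eq_succ (h : p 0 ∉ A) : hitTime A p = hitTime A (fun n => p (n + 1)) + 1 := by
  classical
  by_cases hs : ∃ n, p (n + 1) ∈ A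
  · have h' : ∃ n, p n ∈ A := ⟨_, hs.choose_spec⟩
    rw [hitTime_eq_find h', hitTime_eq_find hs, Nat.find_comp_succ h' hs h]
    push_cast
    rfl
  · simp only [not_exists] at hs
    rw [hitTime_eq_top (p := p) (by rintro (_ | n); exacts [h, hs n]), hitTime_eq_top hs, top_add]

end HittingTime

namespace ProbabilityTheory

variable {Ω β : Type*} [MeasurableSpace Ω] {μ : Measure Ω} [mβ : MeasurableSpace β]
  {f : ℕ → Ω → β}

lemma iIndepFun.indepFun_zero_tail (hf : ∀ k, Measurable (f k)) (hind : iIndepFun f μ) :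
    IndepFun (f 0) (fun ω k => f (k + 1) ω) μ := by
  rw [iIndepFun_iff_iIndep] at hind
  have h := indep_iSup_of_disjoint (fun k => (hf k).comap_le) hind
    (S := {0}) (T := Set.Ioi 0) (by simp)
  rw [IndepFun_iff_Indep]
  refine indep_of_indep_of_le_right (indep_of_indep_of_le_left h ?_) ?_
  · exact le_iSup₂ (f := fun i (_ : i ∈ ({0} : Set ℕ)) => mβ.comap (f i)) 0 rfl
  · rw [MeasurableSpace.pi, MeasurableSpace.comap_iSup]
    refine iSup_le fun k => ?_
    rw [MeasurableSpace.comap_comp]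
    exact le_iSup₂ (f := fun i (_ : i ∈ Set.Ioi 0) => mβ.comap (f i)) (k + 1) k.succ_pos

lemma iIndepFun.lintegral_comp_zero_tail [IsFiniteMeasure μ] [Countable β]
    [MeasurableSingletonClass β] (hf : ∀ k, Measurable (f k)) (hind : iIndepFun f μ)
    {F : β → (ℕ → β) → ℝ≥0∞} (hF : ∀ v, Measurable (F v)) :
    ∫⁻ ω, F (f 0 ω) (fun k => f (k + 1) ω) ∂μ =
      ∫⁻ v, ∫⁻ ω, F v (fun k => f (k + 1) ω) ∂μ ∂(μ.map (f 0)) := by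
  have htail : Measurable fun ω k => f (k + 1) ω := measurable_pi_lambda _ fun k => hf (k + 1)
  have hFm : Measurable (Function.uncurry F) := measurable_from_prod_countable_right hF
  have hmap := (indepFun_iff_map_prod_eq_prod_map_map (hf 0).aemeasurable htail.aemeasurable).mp
    (hind.indepFun_zero_tail hf)
  calc ∫⁻ ω, F (f 0 ω) (fun k => f (k + 1) ω) ∂μ
      = ∫⁻ q, Function.uncurry F q ∂(μ.map fun ω => (f 0 ω, fun k => f (k + 1) ω)) :=
        (lintegral_map hFm ((hf 0).prodMk htail)).symm
    _ = ∫⁻ v, ∫⁻ t, F v t ∂(μ.map fun ω k => f (k + 1) ω) ∂(μ.map (f 0)) := by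
        rw [hmap, lintegral_prod _ hFm.aemeasurable]
        rfl
    _ = _ := by simp only [lintegral_map (hF _) htail]

end ProbabilityTheory

lemma mul_inv_add_mul_lt_add {p q a : ℝ} (ha0 : 0 < a) (ha1 : a < 1) (hpq : p < a * q) :
    p * a⁻¹ + q * a < p + q := by
  have h : (p * a⁻¹ + q * a) * a = p + q * a * a := by field_simp
  nlinarith [mul_pos (sub_pos.2 hpq) (sub_pos.2 ha1)]

namespace QuadrantWalk

def reflect (v : ℤ × ℤ) : ℤ × ℤ := (-v.1, v.2)

section Walk

variable {y v : ℤ × ℤ} {inc : ℕ → ℤ × ℤ}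

lemma stepY_of_nonneg (h : 0 ≤ y.2 + v.2) : stepY y v = y + v :=
  if_pos h

lemma stepY_of_neg (h : y.2 + v.2 < 0) : stepY y v = y :=
  if_neg (not_le.mpr h)

lemma pathY_succ (y : ℤ × ℤ) (inc : ℕ → ℤ × ℤ) (k : ℕ) :
    pathY y inc (k + 1) = pathY (stepY y (reflect (inc 1))) (fun j => inc (j + 1)) k := by
  induction k with
  | zero => rfl
  | succ k ih => exact congrArg (stepY · _) ih

lemma tauY_eq_zero (hy : y.1 = y.2) : tauY y inc = 0 :=
  hitTime_eq_zero hy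

lemma tauY_eq_succ (hy : y.1 ≠ y.2) :
    tauY y inc = tauY (stepY y (reflect (inc 1))) (fun j => inc (j + 1)) + 1 := by
  rw [tauY, hitTime_eq_succ hy]
  simp only [pathY_succ]
  rfl

end Walk

/-- `hitWeight z n y J` is `z ^ τ` on `{τ ≤ n}` and `0` elsewhere, for the walk `Y` started at `y`
and driven by `J 0, J 1, …`; thus `J k` plays the role of `inc (k + 1)` in `pathY y inc`. -/
def hitWeight (z : ℝ) : ℕ → ℤ × ℤ → (ℕ → ℤ × ℤ) → ℝ≥0∞
  | 0, y, _ => if y.1 = y.2 then 1 else 0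
  | n + 1, y, J => if y.1 = y.2 then 1 else
      ENNReal.ofReal z * hitWeight z n (stepY y (reflect (J 0))) (fun k => J (k + 1))

section HitWeight

variable {z : ℝ} {n : ℕ} {y : ℤ × ℤ} {J : ℕ → ℤ × ℤ}

lemma hitWeight_of_eq (hy : y.1 = y.2) : hitWeight z n y J = 1 := by
  cases n <;> simp [hitWeight, hy]

lemma hitWeight_succ_of_ne (hy : y.1 ≠ y.2) :
    hitWeight z (n + 1) y J =
      ENNReal.ofReal z * hitWeight z n (stepY y (reflect (J 0))) (fun k => J (k + 1)) := by
  simp [hitWeight, hy]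

lemma hitWeight_of_tauY_eq (hz : 0 ≤ z) {t : ℕ} {inc : ℕ → ℤ × ℤ} (ht : tauY y inc = t) :
    hitWeight z t y (fun k => inc (k + 1)) = ENNReal.ofReal (z ^ t) := by
  induction t generalizing y inc with
  | zero =>
    by_cases hy : y.1 = y.2
    · simp [hitWeight_of_eq hy]
    · simp [tauY_eq_succ hy] at ht
  | succ t ih =>
    have hy : y.1 ≠ y.2 := fun hy => by
      rw [tauY_eq_zero hy, Nat.cast_succ] at ht
      exact_mod_cast ht
    rw [tauY_eq_succ hy, Nat.cast_succ] at ht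
    rw [hitWeight_succ_of_ne hy, ih (inc := fun j => inc (j + 1)) (by simpa using ht), pow_succ',
      ENNReal.ofReal_mul hz]

lemma hitWeight_le_succ : hitWeight z n y J ≤ hitWeight z (n + 1) y J := by
  induction n generalizing y J with
  | zero => by_cases hy : y.1 = y.2 <;> simp [hitWeight, hy]
  | succ n ih =>
    by_cases hy : y.1 = y.2
    · simp [hitWeight_of_eq hy]
    · rw [hitWeight_succ_of_ne hy, hitWeight_succ_of_ne hy]
      exact mul_le_mul_right ih _

lemma monotone_hitWeight : Monotone (fun n => hitWeight z n y J) :=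
  monotone_nat_of_le_succ fun _ => hitWeight_le_succ

lemma measurable_hitWeight (z : ℝ) (n : ℕ) (y : ℤ × ℤ) : Measurable (hitWeight z n y) := by
  induction n generalizing y with
  | zero => exact measurable_const
  | succ n ih =>
    by_cases hy : y.1 = y.2
    · rw [show hitWeight z (n + 1) y = fun _ => 1 from funext fun _ => hitWeight_of_eq hy]
      exact measurable_const
    · rw [show hitWeight z (n + 1) y = fun J => ENNReal.ofReal z *
          hitWeight z n (stepY y (reflect (J 0))) (fun k => J (k + 1)) from
        funext fun _ => hitWeight_succ_of_ne hy]
      have hF : Measurable fun q : (ℤ × ℤ) × (ℕ → ℤ × ℤ) =>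
          ENNReal.ofReal z * hitWeight z n (stepY y (reflect q.1)) q.2 :=
        measurable_from_prod_countable_right fun v => (ih (stepY y (reflect v))).const_mul _
      exact hF.comp (f := fun J : ℕ → ℤ × ℤ => (J 0, fun k => J (k + 1)))
        ((measurable_pi_apply 0).prodMk (measurable_pi_lambda _ fun k => measurable_pi_apply _))

end HitWeight

section Comparison

variable {Ω : Type*} [MeasurableSpace Ω] {μ : Measure Ω} [IsProbabilityMeasure μ]
  {ν : Measure (ℤ × ℤ)} {z : ℝ} {g : ℤ × ℤ → ℝ≥0∞}

theorem lintegral_hitWeight_le (hdiag : ∀ y : ℤ × ℤ, y.1 = y.2 → 1 ≤ g y)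
    (hdrift : ∀ y : ℤ × ℤ, y.1 ≠ y.2 →
      ENNReal.ofReal z * ∫⁻ v, g (stepY y (reflect v)) ∂ν ≤ g y)
    {J : ℕ → Ω → ℤ × ℤ} (hJ : ∀ k, Measurable (J k)) (hind : iIndepFun J μ)
    (hlaw : ∀ k, μ.map (J k) = ν) (n : ℕ) (y : ℤ × ℤ) :
    ∫⁻ ω, hitWeight z n y (fun k => J k ω) ∂μ ≤ g y := by
  induction n generalizing y J with
  | zero =>
    by_cases hy : y.1 = y.2
    · simp [hitWeight, hy, hdiag y hy]
    · simp [hitWeight, hy]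
  | succ n ih =>
    by_cases hy : y.1 = y.2
    · simp [hitWeight_of_eq hy, hdiag y hy]
    have htail (v : ℤ × ℤ) :
        ∫⁻ ω, hitWeight z n (stepY y (reflect v)) (fun k => J (k + 1) ω) ∂μ ≤
          g (stepY y (reflect v)) :=
      ih (fun k => hJ (k + 1)) (hind.precomp Nat.succ_injective) (fun k => hlaw (k + 1)) _
    calc ∫⁻ ω, hitWeight z (n + 1) y (fun k => J k ω) ∂μ
        = ENNReal.ofReal z * ∫⁻ v, ∫⁻ ω, hitWeight z n (stepY y (reflect v))
            (fun k => J (k + 1) ω) ∂μ ∂ν := by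
          simp only [hitWeight_succ_of_ne hy]
          rw [lintegral_const_mul' _ _ ENNReal.ofReal_ne_top,
            hind.lintegral_comp_zero_tail hJ (F := fun v => hitWeight z n (stepY y (reflect v)))
              fun _ => measurable_hitWeight .., hlaw 0]
      _ ≤ ENNReal.ofReal z * ∫⁻ v, g (stepY y (reflect v)) ∂ν := by
          gcongr with v
          exact htail v
      _ ≤ g y := hdrift y hy

theorem setLIntegral_tauY_le (hz : 0 ≤ z) (hdiag : ∀ y : ℤ × ℤ, y.1 = y.2 → 1 ≤ g y)
    (hdrift : ∀ y : ℤ × ℤ, y.1 ≠ y.2 →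
      ENNReal.ofReal z * ∫⁻ v, g (stepY y (reflect v)) ∂ν ≤ g y)
    {I : ℕ → Ω → ℤ × ℤ} (hI : ∀ k, Measurable (I (k + 1)))
    (hind : iIndepFun (fun k => I (k + 1)) μ) (hlaw : ∀ k, μ.map (I (k + 1)) = ν) (y : ℤ × ℤ) :
    ∫⁻ ω in {ω | tauY y (fun k => I k ω) < ⊤},
      ENNReal.ofReal (z ^ (tauY y (fun k => I k ω)).toNat) ∂μ ≤ g y := by
  have hmeas (n : ℕ) : Measurable fun ω => hitWeight z n y (fun k => I (k + 1) ω) :=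
    (measurable_hitWeight z n y).comp (measurable_pi_lambda _ hI)
  calc _ ≤ ∫⁻ ω in {ω | tauY y (fun k => I k ω) < ⊤},
          ⨆ n, hitWeight z n y (fun k => I (k + 1) ω) ∂μ := by
        refine setLIntegral_mono (Measurable.iSup hmeas) fun ω hω => ?_
        obtain ⟨t, ht⟩ := ENat.ne_top_iff_exists.mp (ne_top_of_lt hω)
        rw [← ht, ENat.toNat_natCast, ← hitWeight_of_tauY_eq hz ht.symm]
        exact le_iSup (fun n => hitWeight z n y (fun k => I (k + 1) ω)) t
    _ ≤ ∫⁻ ω, ⨆ n, hitWeight z n y (fun k => I (k + 1) ω) ∂μ := setLIntegral_le_lintegral _ _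
    _ = ⨆ n, ∫⁻ ω, hitWeight z n y (fun k => I (k + 1) ω) ∂μ :=
        lintegral_iSup hmeas fun _ _ hmn _ => monotone_hitWeight hmn
    _ ≤ g y := iSup_le fun n => lintegral_hitWeight_le hdiag hdrift hI hind hlaw n y

end Comparison

section Increments

variable {l1 m1 l2 m2 : ℝ}

def incrementLaw (l1 m1 l2 m2 : ℝ) : Measure (ℤ × ℤ) :=
  ENNReal.ofReal l1 • Measure.dirac (1, 0) + ENNReal.ofReal m1 • Measure.dirac (-1, 0) +
    ENNReal.ofReal l2 • Measure.dirac (0, 1) + ENNReal.ofReal m2 • Measure.dirac (0, -1)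

lemma lintegral_incrementLaw (f : ℤ × ℤ → ℝ≥0∞) :
    ∫⁻ v, f v ∂incrementLaw l1 m1 l2 m2 =
      ENNReal.ofReal l1 * f (1, 0) + ENNReal.ofReal m1 * f (-1, 0) +
        ENNReal.ofReal l2 * f (0, 1) + ENNReal.ofReal m2 * f (0, -1) := by
  simp [incrementLaw, lintegral_add_measure, lintegral_smul_measure]

lemma map_eq_incrementLaw {Ω : Type*} [MeasurableSpace Ω] {μ : Measure Ω}
    [IsProbabilityMeasure μ] {X : Ω → ℤ × ℤ} (hX : Measurable X) (hl1 : 0 ≤ l1) (hm1 : 0 ≤ m1)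
    (hl2 : 0 ≤ l2) (hm2 : 0 ≤ m2) (hsum : l1 + l2 + m1 + m2 = 1)
    (hlaw : μ (X ⁻¹' {(1, 0)}) = ENNReal.ofReal l1 ∧ μ (X ⁻¹' {(-1, 0)}) = ENNReal.ofReal m1 ∧
      μ (X ⁻¹' {(0, 1)}) = ENNReal.ofReal l2 ∧ μ (X ⁻¹' {(0, -1)}) = ENNReal.ofReal m2) :
    μ.map X = incrementLaw l1 m1 l2 m2 := by
  have : IsProbabilityMeasure (μ.map X) := Measure.isProbabilityMeasure_map hX.aemeasurable
  obtain ⟨h1, h2, h3, h4⟩ := hlaw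
  let P : Finset (ℤ × ℤ) := {(1, 0), (-1, 0), (0, 1), (0, -1)}
  have hP : μ.map X P = 1 := by
    rw [← sum_measure_singleton, Finset.sum_insert (by decide), Finset.sum_insert (by decide),
      Finset.sum_pair (by decide)]
    simp only [Measure.map_apply hX (measurableSet_singleton _), h1, h2, h3, h4]
    rw [← ENNReal.ofReal_add hl2 hm2, ← ENNReal.ofReal_add hm1 (by positivity),
      ← ENNReal.ofReal_add hl1 (by positivity), ENNReal.ofReal_eq_one]
    linarith
  refine Measure.ext_of_singleton fun w => ?_
  by_cases hw : w ∈ P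
  · simp only [Finset.mem_insert, Finset.mem_singleton, P] at hw
    rcases hw with rfl | rfl | rfl | rfl <;>
      simp [incrementLaw, Measure.map_apply hX, h1, h2, h3, h4]
  · have hw0 : μ.map X {w} = 0 := measure_mono_null (Set.singleton_subset_iff.mpr hw)
      ((prob_compl_eq_zero_iff P.measurableSet).mpr hP)
    simp only [Finset.mem_insert, Finset.mem_singleton, not_or, P] at hw
    simp [hw0, incrementLaw, hw]

end Increments

/-- Off the wedge `0 ≤ y.2 ≤ y.1` the value `⊤` makes the drift condition automatic there; started
inside the wedge, the walk cannot leave it before reaching the diagonal. -/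
def lyapunov (a K : ℝ) (y : ℤ × ℤ) : ℝ≥0∞ :=
  if 0 ≤ y.2 ∧ y.2 ≤ y.1 then ENNReal.ofReal (a ^ (y.1 - y.2) + K * a ^ y.1) else ⊤

section Lyapunov

variable {l1 m1 l2 m2 a K z : ℝ}

lemma lyapunov_of_mem {y : ℤ × ℤ} (h0 : 0 ≤ y.2) (h1 : y.2 ≤ y.1) :
    lyapunov a K y = ENNReal.ofReal (a ^ (y.1 - y.2) + K * a ^ y.1) :=
  if_pos ⟨h0, h1⟩

lemma one_le_lyapunov (ha : 0 < a) (hK : 0 ≤ K) {y : ℤ × ℤ} (hy : y.1 = y.2) :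
    1 ≤ lyapunov a K y := by
  unfold lyapunov
  split_ifs
  · rw [hy, sub_self, zpow_zero, ENNReal.one_le_ofReal]
    exact le_add_of_nonneg_right (by positivity)
  · exact le_top

lemma lyapunov_le (ha0 : 0 < a) (ha1 : a ≤ 1) (hK : 0 ≤ K) {y : ℤ × ℤ} (h0 : 0 ≤ y.2)
    (h1 : y.2 ≤ y.1) : lyapunov a K y ≤ ENNReal.ofReal (1 + K) := by
  rw [lyapunov_of_mem h0 h1]
  refine ENNReal.ofReal_le_ofReal (add_le_add (zpow_le_one₀ ha0 ha1 (by omega)) ?_)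
  exact mul_le_of_le_one_right hK (zpow_le_one₀ ha0 ha1 (by omega))

lemma lyapunov_drift (hl1 : 0 ≤ l1) (hm1 : 0 ≤ m1) (hl2 : 0 ≤ l2) (hm2 : 0 ≤ m2) (ha : 0 < a)
    (hK : 0 ≤ K) (hz : 0 ≤ z)
    (hΦ : z * ((l1 + l2) * a⁻¹ + (m1 + m2) * a) ≤ 1)
    (hφ : z * (l1 * a⁻¹ + m1 * a + l2 + m2) ≤ 1)
    (hB : z * ((l1 + l2) * a⁻¹ + m1 * a + m2) + K * (z * (l1 * a⁻¹ + m1 * a + l2 + m2)) ≤ 1 + K)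
    {y : ℤ × ℤ} (hy : y.1 ≠ y.2) :
    ENNReal.ofReal z * ∫⁻ v, lyapunov a K (stepY y (reflect v)) ∂incrementLaw l1 m1 l2 m2 ≤
      lyapunov a K y := by
  obtain ⟨x, h⟩ := y
  by_cases hw : 0 ≤ h ∧ h ≤ x
  swap
  · simp [lyapunov, hw]
  obtain ⟨h0, hx⟩ := hw
  have hlt : h < x := lt_of_le_of_ne hx (Ne.symm hy)
  have hmove (v : ℤ × ℤ) (hv0 : 0 ≤ h + v.2) (hv1 : h + v.2 ≤ x + v.1) :
      lyapunov a K (stepY (x, h) v) =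
        ENNReal.ofReal (a ^ (x - h) * a ^ (v.1 - v.2) + K * (a ^ x * a ^ v.1)) := by
    rw [stepY_of_nonneg hv0, lyapunov_of_mem hv0 hv1, ← zpow_add₀ ha.ne', ← zpow_add₀ ha.ne']
    congr 4
    simp only [Prod.fst_add, Prod.snd_add]
    ring
  rw [lintegral_incrementLaw, lyapunov_of_mem (y := (x, h)) h0 hx]
  simp only [reflect, neg_neg, neg_zero]
  rw [hmove (-1, 0) (by simpa) (by simp; omega), hmove (1, 0) (by simpa) (by simp; omega),
    hmove (0, 1) (by simp; omega) (by simp; omega)]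
  rcases (show 1 ≤ h ∨ h = 0 by omega) with h1 | rfl
  · rw [hmove (0, -1) (by simp; omega) (by simp; omega)]
    simp only [Int.reduceNeg, sub_zero, zpow_neg, zpow_ofNat, pow_one, zero_sub, pow_zero, mul_one,
      sub_neg_eq_add, zero_add]
    simp (disch := positivity) only [← ENNReal.ofReal_mul, ← ENNReal.ofReal_add]
    refine ENNReal.ofReal_le_ofReal ?_
    calc _ = a ^ (x - h) * (z * ((l1 + l2) * a⁻¹ + (m1 + m2) * a)) +
          K * a ^ x * (z * (l1 * a⁻¹ + m1 * a + l2 + m2)) := by ring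
      _ ≤ a ^ (x - h) * 1 + K * a ^ x * 1 := by gcongr
      _ = _ := by ring
  · rw [stepY_of_neg (by simp), lyapunov_of_mem (y := (x, 0)) le_rfl hx]
    simp only [sub_zero, Int.reduceNeg, zpow_neg, zpow_ofNat, pow_one, zero_sub, pow_zero, mul_one]
    simp (disch := positivity) only [← ENNReal.ofReal_mul, ← ENNReal.ofReal_add]
    refine ENNReal.ofReal_le_ofReal ?_
    calc _ = a ^ x * (z * ((l1 + l2) * a⁻¹ + m1 * a + m2) +
          K * (z * (l1 * a⁻¹ + m1 * a + l2 + m2))) := by ring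
      _ ≤ a ^ x * (1 + K) := by gcongr
      _ = _ := by ring

end Lyapunov

lemma exists_drift_constants {l1 m1 l2 m2 : ℝ} (hl1 : 0 < l1) (hm1 : 0 < m1) (hl2 : 0 < l2)
    (hm2 : 0 < m2) (hsum : l1 + l2 + m1 + m2 = 1) (hρ1 : l1 / m1 < 1)
    (hord2 : (l1 + l2) / (m1 + m2) ≤ l1 / m1) :
    ∃ a z K : ℝ, 0 < a ∧ a < 1 ∧ 1 < z ∧ 0 ≤ K ∧
      z * ((l1 + l2) * a⁻¹ + (m1 + m2) * a) ≤ 1 ∧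
      z * (l1 * a⁻¹ + m1 * a + l2 + m2) ≤ 1 ∧
      z * ((l1 + l2) * a⁻¹ + m1 * a + m2) + K * (z * (l1 * a⁻¹ + m1 * a + l2 + m2)) ≤ 1 + K := by
  obtain ⟨a, hρa, ha1⟩ := exists_between hρ1
  have ha0 : 0 < a := (div_pos hl1 hm1).trans hρa
  have hΦ : (l1 + l2) * a⁻¹ + (m1 + m2) * a < 1 := by
    rw [← hsum]
    refine (mul_inv_add_mul_lt_add ha0 ha1 ?_).trans_eq (by ring)
    exact (div_lt_iff₀ (by positivity)).mp (hord2.trans_lt hρa)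
  have hφ : l1 * a⁻¹ + m1 * a + l2 + m2 < 1 := by
    have := mul_inv_add_mul_lt_add ha0 ha1 ((div_lt_iff₀ hm1).mp hρa)
    linarith
  set M := max ((l1 + l2) * a⁻¹ + (m1 + m2) * a) (l1 * a⁻¹ + m1 * a + l2 + m2)
  have hM0 : 0 ≤ M := le_max_of_le_right (by positivity)
  have hM1 : M < 1 := max_lt hΦ hφ
  set z := 2 / (1 + M)
  have hz0 : 0 ≤ z := by positivity
  have hzM : z * M < 1 := by
    rw [div_mul_eq_mul_div, div_lt_one (by positivity)]
    linarith
  have hzφ : z * (l1 * a⁻¹ + m1 * a + l2 + m2) < 1 :=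
    (mul_le_mul_of_nonneg_left (le_max_right _ _) hz0).trans_lt hzM
  refine ⟨a, z, z * ((l1 + l2) * a⁻¹ + m1 * a + m2) / (1 - z * (l1 * a⁻¹ + m1 * a + l2 + m2)),
    ha0, ha1, ?_, ?_, ((mul_le_mul_of_nonneg_left (le_max_left _ _) hz0).trans_lt hzM).le,
    hzφ.le, ?_⟩
  · rw [lt_div_iff₀ (by positivity)]
    linarith
  · exact div_nonneg (by positivity) (sub_nonneg.2 hzφ.le)
  · have := div_mul_cancel₀ (z * ((l1 + l2) * a⁻¹ + m1 * a + m2)) (sub_pos.2 hzφ).ne'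
    nlinarith

end QuadrantWalk

open QuadrantWalk

theorem stmt6_general {Ω : Type} [MeasurableSpace Ω] (μ : Measure Ω) [IsProbabilityMeasure μ]
    (l1 m1 l2 m2 : ℝ)
    (hl1 : 0 < l1) (hm1 : 0 < m1) (hl2 : 0 < l2) (hm2 : 0 < m2)
    (hsum : l1 + l2 + m1 + m2 = 1)
    (hρ1 : l1 / m1 < 1)
    (hord2 : (l1 + l2) / (m1 + m2) ≤ l1 / m1)
    (I : ℕ → Ω → ℤ × ℤ) (hI : IncrementsLaw l1 m1 l2 m2 μ I) :
    ∃ z0 : ℝ, 1 < z0 ∧ ∃ C1 : ℝ, 0 < C1 ∧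
      ∀ y : ℤ × ℤ, 0 ≤ y.2 → y.2 ≤ y.1 →
        ∫⁻ ω in {ω | tauY y (fun k => I k ω) < ⊤},
            ENNReal.ofReal (z0 ^ (tauY y (fun k => I k ω)).toNat) ∂μ <
          ENNReal.ofReal C1 := by
  obtain ⟨hmeas, hind, hlaw⟩ := hI
  obtain ⟨a, z, K, ha0, ha1, hz1, hK, hΦ, hφ, hB⟩ :=
    exists_drift_constants hl1 hm1 hl2 hm2 hsum hρ1 hord2
  refine ⟨z, hz1, K + 2, by linarith, fun y hy0 hy1 => ?_⟩
  calc _ ≤ lyapunov a K y :=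
        setLIntegral_tauY_le (by linarith) (fun _ hy => one_le_lyapunov ha0 hK hy)
          (fun _ hy => lyapunov_drift hl1.le hm1.le hl2.le hm2.le ha0 hK (by linarith) hΦ hφ hB hy)
          (fun _ => hmeas _) (hind.precomp Nat.succ_injective)
          (fun _ => map_eq_incrementLaw (hmeas _) hl1.le hm1.le hl2.le hm2.le hsum (hlaw _)) y
    _ ≤ ENNReal.ofReal (1 + K) := lyapunov_le ha0 ha1.le hK hy0 hy1
    _ < ENNReal.ofReal (K + 2) := (ENNReal.ofReal_lt_ofReal_iff (by linarith)).mpr (by linarith)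

theorem stmt6 {Ω : Type} [MeasurableSpace Ω] (μ : Measure Ω) [IsProbabilityMeasure μ]
    (l1 m1 l2 m2 : ℝ)
    (hl1 : 0 < l1) (hm1 : 0 < m1) (hl2 : 0 < l2) (hm2 : 0 < m2)
    (hsum : l1 + l2 + m1 + m2 = 1)
    (hρ1 : l1 / m1 < 1) (hρ2 : l2 / m2 < 1)
    (hord1 : l2 / m2 ≤ (l1 + l2) / (m1 + m2))
    (hord2 : (l1 + l2) / (m1 + m2) ≤ l1 / m1)
    (hneq : l1 / m1 ≠ l2 / m2)
    (hr2 : ((l1 + l2) / (m1 + m2)) ^ 2 < l2 / m2)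
    (I : ℕ → Ω → ℤ × ℤ) (hI : IncrementsLaw l1 m1 l2 m2 μ I) :
    ∃ z0 : ℝ, 1 < z0 ∧ ∃ C1 : ℝ, 0 < C1 ∧
      ∀ y : ℤ × ℤ, 0 ≤ y.2 → y.2 ≤ y.1 →
        ∫⁻ ω in {ω | tauY y (fun k => I k ω) < ⊤},
            ENNReal.ofReal (z0 ^ (tauY y (fun k => I k ω)).toNat) ∂μ <
          ENNReal.ofReal C1 :=
  stmt6_general μ l1 m1 l2 m2 hl1 hm1 hl2 hm2 hsum hρ1 hord2 I hI
end
end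

section
/- For every δ > 0 there exists C2 > 0 such that P_y( n·C2 < τ < ∞ ) ≤ e^{−δn} for every y ∈ ℤ × ℤ≥0 with y(1) > y(2) and every integer n > 1. -/
open MeasureTheory ProbabilityTheory Filter

noncomputable section

/-! If `Y` hits the diagonal at time `m`, let `j ≤ m` be the last step at which the reflection of
`Y(2)` at `0` acted. The first coordinate of `Y` moves freely and the second freely after step `j`,
so `1 ≤ y(1) - y(2)·[j = 0]` is at most the sum of `v(1)` over the first `m` increments `v` plus
the sum of `v(2)` over those after step `j`. This is a sum of `m` independent increments with
negative drift (`λ1 < μ1` and `λ1 + λ2 < μ1 + μ2`), so a Chernoff bound with one exponential tilt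
`θ > 0` serving both drifts makes it nonnegative with probability at most `q ^ m`, `q < 1`.
Summing `(m + 1) q ^ m` over `m > n C2` leaves a geometric tail, which is `≤ e^{-δ n}` once `C2`
is large. -/

open Real Topology Finset

def unitSteps : Finset (ℤ × ℤ) := {(1, 0), (-1, 0), (0, 1), (0, -1)}

-- The drop of `Y(1) - Y(2)` at step `k + 1` (increment `v`) when the last reflection of `Y(2)`
-- was at step `j`; before step `j` only the drop `v.1` of the free coordinate `Y(1)` is counted.
def gapDecrement (j k : ℕ) (v : ℤ × ℤ) : ℤ := v.1 + if j ≤ k then v.2 else 0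

section Walk

variable {y : ℤ × ℤ} {inc : ℕ → ℤ × ℤ}

lemma pathY_snd_nonneg (hy : 0 ≤ y.2) (m : ℕ) : 0 ≤ (pathY y inc m).2 := by
  induction m with
  | zero => exact hy
  | succ k ih =>
    simp only [pathY, stepY]
    split_ifs with h
    exacts [h, ih]

lemma pathY_succ_eq_or (hy : 0 ≤ y.2) (hinc : ∀ k, inc k ∈ unitSteps) (k : ℕ) :
    pathY y inc (k + 1) = pathY y inc k + (-(inc (k + 1)).1, (inc (k + 1)).2) ∨
      inc (k + 1) = (0, -1) ∧ (pathY y inc k).2 = 0 ∧ pathY y inc (k + 1) = pathY y inc k := by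
  have hk := pathY_snd_nonneg (inc := inc) hy k
  have hv := hinc (k + 1)
  simp only [pathY, stepY]
  split_ifs with h
  · exact Or.inl rfl
  · simp only [unitSteps, mem_insert, mem_singleton] at hv
    rcases hv with hv | hv | hv | hv <;> simp [hv] at h ⊢ <;> omega

lemma pathY_fst_eq (hy : 0 ≤ y.2) (hinc : ∀ k, inc k ∈ unitSteps) (m : ℕ) :
    (pathY y inc m).1 = y.1 - ∑ k ∈ range m, (inc (k + 1)).1 := by
  induction m with
  | zero => simp [pathY]
  | succ k ih =>
    rw [sum_range_succ]
    rcases pathY_succ_eq_or hy hinc k with h | ⟨hv, -, h⟩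
    · rw [h, Prod.fst_add, ih]; ring
    · rw [h, ih, hv]; ring

lemma exists_pathY_snd_le (hy : 0 ≤ y.2) (hinc : ∀ k, inc k ∈ unitSteps) (m : ℕ) :
    ∃ j ≤ m, (pathY y inc m).2 ≤
      (if j = 0 then y.2 else 0) + ∑ k ∈ range m, if j ≤ k then (inc (k + 1)).2 else 0 := by
  induction m with
  | zero => exact ⟨0, le_rfl, by simp [pathY]⟩
  | succ k ih =>
    obtain ⟨j, hjk, hj⟩ := ih
    rcases pathY_succ_eq_or hy hinc k with h | ⟨-, h0, h⟩
    · refine ⟨j, hjk.trans k.le_succ, ?_⟩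
      rw [sum_range_succ, if_pos hjk, h, Prod.snd_add]
      linarith
    · refine ⟨k + 1, le_rfl, ?_⟩
      rw [sum_eq_zero fun i hi => if_neg (by simp only [mem_range] at hi; omega)]
      simp [h, h0]

lemma exists_sum_gapDecrement_pos_of_hit (hy : 0 ≤ y.2) (hyx : y.2 < y.1)
    (hinc : ∀ k, inc k ∈ unitSteps) {m : ℕ} (hm : (pathY y inc m).1 = (pathY y inc m).2) :
    ∃ j ≤ m, 0 < ∑ k ∈ range m, gapDecrement j k (inc (k + 1)) := by
  obtain ⟨j, hjm, hj⟩ := exists_pathY_snd_le hy hinc m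
  refine ⟨j, hjm, ?_⟩
  have hfst := pathY_fst_eq hy hinc m
  simp only [gapDecrement, sum_add_distrib]
  split_ifs at hj <;> omega

end Walk

lemma hitTime_mem {A : Set (ℤ × ℤ)} {p : ℕ → ℤ × ℤ} (h : hitTime A p < ⊤) :
    p (hitTime A p).toNat ∈ A := by
  have hne : ((fun n : ℕ => (n : ℕ∞)) '' {n | p n ∈ A}).Nonempty := by
    by_contra hc
    simp [hitTime, Set.not_nonempty_iff_eq_empty.mp hc] at h
  obtain ⟨n, hn, hn'⟩ := csInf_mem hne
  rwa [hitTime, ← hn', ENat.toNat_natCast]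

lemma eventually_mul_exp_add_mul_exp_neg_lt {a b : ℝ} (hab : a < b) :
    ∀ᶠ θ in 𝓝[>] 0, a * exp θ + b * exp (-θ) < a + b := by
  have hnear : ∀ᶠ θ in 𝓝 (0 : ℝ), a * exp θ < b :=
    (continuous_const.mul continuous_exp).continuousAt.eventually_lt continuousAt_const
      (by simpa using hab)
  filter_upwards [nhdsWithin_le_nhds hnear, self_mem_nhdsWithin] with θ hθb hθ
  have h1 : 1 < exp θ := one_lt_exp_iff.mpr hθ
  have h2 : exp θ * exp (-θ) = 1 := by rw [← exp_add, add_neg_cancel, exp_zero]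
  have key : (a * exp θ + b * exp (-θ) - (a + b)) * exp θ =
      -((exp θ - 1) * (b - a * exp θ)) := by linear_combination b * h2
  nlinarith [mul_pos (sub_pos.mpr h1) (sub_pos.mpr hθb), exp_pos θ]

lemma tsum_tail_succ_mul_sq_pow_le {r t : ℝ} (hr0 : 0 < r) (hr1 : r < 1) :
    ∑' m : ℕ, ENNReal.ofReal (if t < m then (m + 1) * (r ^ 2) ^ m else 0) ≤
      ENNReal.ofReal (r ^ t / (1 - r) ^ 2) := by
  have hsum : HasSum (fun m : ℕ => r ^ t * ((m + 1) * r ^ m)) (r ^ t / (1 - r) ^ 2) := by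
    have := (hasSum_choose_mul_geometric_of_norm_lt_one 1
      (by rwa [Real.norm_of_nonneg hr0.le] : ‖r‖ < 1)).mul_left (r ^ t)
    simpa [div_eq_mul_inv] using this
  rw [← hsum.tsum_eq, ENNReal.ofReal_tsum_of_nonneg (fun m => by positivity) hsum.summable]
  refine ENNReal.tsum_le_tsum fun m => ENNReal.ofReal_le_ofReal ?_
  split_ifs with h
  · have hrm : r ^ m ≤ r ^ t := by
      rw [← rpow_natCast]; exact rpow_le_rpow_of_exponent_ge hr0 hr1.le h.le
    rw [← pow_mul, two_mul, pow_add]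
    nlinarith [mul_le_mul_of_nonneg_left hrm (by positivity : (0 : ℝ) ≤ (m + 1) * r ^ m)]
  · positivity

lemma exists_pos_mul_rpow_le_exp {r K δ : ℝ} (hr0 : 0 < r) (hr1 : r < 1) (hK : 1 ≤ K)
    (hδ : 0 < δ) : ∃ C > 0, ∀ s : ℝ, 1 ≤ s → K * r ^ (s * C) ≤ exp (-δ * s) := by
  have hlogr : log r < 0 := log_neg hr0 hr1
  have hlogK : 0 ≤ log K := log_nonneg hK
  refine ⟨(δ + log K) / -log r, div_pos (by linarith) (neg_pos.mpr hlogr), fun s hs => ?_⟩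
  have hexponent : log r * (s * ((δ + log K) / -log r)) = -s * (δ + log K) := by
    field_simp [hlogr.ne]
  calc K * r ^ (s * ((δ + log K) / -log r))
      = exp (log K - s * (δ + log K)) := by
        rw [rpow_def_of_pos hr0, hexponent, sub_eq_add_neg, exp_add, exp_log (by linarith),
          neg_mul]
    _ ≤ exp (-δ * s) := exp_le_exp.mpr (by nlinarith)

lemma exists_tsum_tail_succ_mul_pow_le_exp {q δ : ℝ} (hq0 : 0 < q) (hq1 : q < 1) (hδ : 0 < δ) :
    ∃ C > 0, ∀ s : ℝ, 1 ≤ s →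
      ∑' m : ℕ, ENNReal.ofReal (if s * C < m then (m + 1) * q ^ m else 0) ≤
        ENNReal.ofReal (exp (-δ * s)) := by
  set r := √q
  have hr0 : 0 < r := sqrt_pos.mpr hq0
  have hr1 : r < 1 := (sqrt_lt' one_pos).mpr (by simpa using hq1)
  have hq : q = r ^ 2 := (sq_sqrt hq0.le).symm
  obtain ⟨C, hC, hexp⟩ := exists_pos_mul_rpow_le_exp hr0 hr1
    (one_le_inv_iff₀.mpr ⟨by nlinarith, by nlinarith⟩ : 1 ≤ ((1 - r) ^ 2)⁻¹) hδ
  refine ⟨C, hC, fun s hs => ?_⟩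
  rw [hq]
  refine (tsum_tail_succ_mul_sq_pow_le hr0 hr1).trans (ENNReal.ofReal_le_ofReal ?_)
  simpa [div_eq_inv_mul] using hexp s hs

section Probability

variable {Ω : Type*} [MeasurableSpace Ω] {μ : Measure Ω}

lemma integrable_and_integral_comp_eq_sum_of_ae_mem [IsFiniteMeasure μ] {β : Type*}
    [MeasurableSpace β] [MeasurableSingletonClass β] [DecidableEq β] {Z : Ω → β}
    (hZ : Measurable Z) {s : Finset β} (hs : ∀ᵐ ω ∂μ, Z ω ∈ s) (g : β → ℝ) :
    Integrable (fun ω => g (Z ω)) μ ∧ ∫ ω, g (Z ω) ∂μ = ∑ v ∈ s, μ.real (Z ⁻¹' {v}) * g v := by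
  have hfiber : ∀ v, Integrable ((Z ⁻¹' {v}).indicator fun _ => g v) μ :=
    fun v => (integrable_const _).indicator (hZ (measurableSet_singleton v))
  have hae : (fun ω => g (Z ω)) =ᵐ[μ]
      fun ω => ∑ v ∈ s, (Z ⁻¹' {v}).indicator (fun _ => g v) ω := by
    filter_upwards [hs] with ω hω
    rw [sum_eq_single_of_mem _ hω fun v _ hv => ?_]
    · simp
    · simp [Ne.symm hv]
  refine ⟨(integrable_finsetSum _ fun v _ => hfiber v).congr hae.symm, ?_⟩
  rw [integral_congr_ae hae, integral_finsetSum _ fun v _ => hfiber v]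
  simp [integral_indicator_const _ (hZ (measurableSet_singleton _)), mul_comm]

def HasUnitStepLaw (l1 m1 l2 m2 : ℝ) (μ : Measure Ω) (Z : Ω → ℤ × ℤ) : Prop :=
  μ (Z ⁻¹' {(1, 0)}) = ENNReal.ofReal l1 ∧ μ (Z ⁻¹' {(-1, 0)}) = ENNReal.ofReal m1 ∧
    μ (Z ⁻¹' {(0, 1)}) = ENNReal.ofReal l2 ∧ μ (Z ⁻¹' {(0, -1)}) = ENNReal.ofReal m2

namespace HasUnitStepLaw

variable [IsProbabilityMeasure μ] {l1 m1 l2 m2 : ℝ} {Z : Ω → ℤ × ℤ}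

lemma ae_mem_unitSteps (hlaw : HasUnitStepLaw l1 m1 l2 m2 μ Z) (hZ : Measurable Z)
    (hl1 : 0 ≤ l1) (hm1 : 0 ≤ m1) (hl2 : 0 ≤ l2) (hm2 : 0 ≤ m2) (hsum : l1 + l2 + m1 + m2 = 1) :
    ∀ᵐ ω ∂μ, Z ω ∈ unitSteps := by
  obtain ⟨h1, h2, h3, h4⟩ := hlaw
  have hmeas : MeasurableSet (Z ⁻¹' unitSteps) := hZ (Finset.measurableSet _)
  change ∀ᵐ ω ∂μ, ω ∈ Z ⁻¹' unitSteps
  rw [ae_mem_iff_measure_eq hmeas.nullMeasurableSet,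
    ← sum_measure_preimage_singleton _ fun v _ => hZ (measurableSet_singleton v), unitSteps,
    sum_insert (by decide), sum_insert (by decide), sum_insert (by decide),
    sum_singleton, h1, h2, h3, h4, ← ENNReal.ofReal_add hl2 hm2,
    ← ENNReal.ofReal_add hm1 (by positivity), ← ENNReal.ofReal_add hl1 (by positivity),
    measure_univ, ← ENNReal.ofReal_one]
  congr 1
  linarith

lemma mgf_comp_eq (hlaw : HasUnitStepLaw l1 m1 l2 m2 μ Z) (hZ : Measurable Z)
    (hl1 : 0 ≤ l1) (hm1 : 0 ≤ m1) (hl2 : 0 ≤ l2) (hm2 : 0 ≤ m2) (hsum : l1 + l2 + m1 + m2 = 1)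
    (ψ : ℤ × ℤ → ℤ) (θ : ℝ) :
    Integrable (fun ω => exp (θ * ψ (Z ω))) μ ∧
      mgf (fun ω => (ψ (Z ω) : ℝ)) μ θ =
        l1 * exp (θ * ψ (1, 0)) + m1 * exp (θ * ψ (-1, 0)) + l2 * exp (θ * ψ (0, 1)) +
          m2 * exp (θ * ψ (0, -1)) := by
  obtain ⟨hint, heq⟩ := integrable_and_integral_comp_eq_sum_of_ae_mem hZ
    (hlaw.ae_mem_unitSteps hZ hl1 hm1 hl2 hm2 hsum) fun v => exp (θ * ψ v)
  obtain ⟨h1, h2, h3, h4⟩ := hlaw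
  refine ⟨hint, ?_⟩
  rw [mgf, heq, unitSteps, sum_insert (by decide), sum_insert (by decide),
    sum_insert (by decide), sum_singleton]
  simp only [measureReal_def, h1, h2, h3, h4, ENNReal.toReal_ofReal, hl1, hm1, hl2, hm2]
  ring

end HasUnitStepLaw

lemma measure_sum_nonneg_le_pow {ι : Type*} [IsProbabilityMeasure μ] {X : ι → Ω → ℝ}
    (hindep : iIndepFun X μ) (hmeas : ∀ i, Measurable (X i)) {θ q : ℝ} (hθ : 0 ≤ θ)
    (hint : ∀ i, Integrable (fun ω => exp (θ * X i ω)) μ) (hmgf : ∀ i, mgf (X i) μ θ ≤ q)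
    (s : Finset ι) :
    μ {ω | 0 ≤ ∑ i ∈ s, X i ω} ≤ ENNReal.ofReal (q ^ s.card) := by
  have hchernoff := measure_ge_le_exp_mul_mgf 0 hθ (hindep.integrable_exp_mul_sum hmeas
    (s := s) fun i _ => hint i)
  rw [mul_zero, exp_zero, one_mul, hindep.mgf_sum hmeas] at hchernoff
  have hprod : ∏ i ∈ s, mgf (X i) μ θ ≤ q ^ s.card := by
    simpa using prod_le_prod (fun i _ => mgf_nonneg) fun i _ => hmgf i
  rw [← ENNReal.ofReal_toReal (measure_ne_top μ _)]
  refine ENNReal.ofReal_le_ofReal ((le_of_eq ?_).trans (hchernoff.trans hprod))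
  simp [measureReal_def]

lemma measure_tauY_lt_top_and_gt_le {I : ℕ → Ω → ℤ × ℤ} {q : ℝ} {y : ℤ × ℤ} (hy2 : 0 ≤ y.2)
    (hy : y.2 < y.1)    (hsteps : ∀ᵐ ω ∂μ, ∀ k, I k ω ∈ unitSteps)
    (hchernoff : ∀ m j, μ {ω | 0 ≤ ∑ k ∈ range m, (gapDecrement j k (I (k + 1) ω) : ℝ)} ≤
      ENNReal.ofReal (q ^ m)) (t : ℝ) :
    μ {ω | tauY y (fun k => I k ω) < ⊤ ∧ t < ((tauY y (fun k => I k ω)).toNat : ℝ)} ≤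
      ∑' m : ℕ, ENNReal.ofReal (if t < m then (m + 1) * q ^ m else 0) := by
  set E : ℕ → ℕ → Set Ω := fun m j =>
    {ω | t < m ∧ 0 ≤ ∑ k ∈ range m, (gapDecrement j k (I (k + 1) ω) : ℝ)}
  calc _ ≤ μ (⋃ m, ⋃ j ∈ range (m + 1), E m j) := by
        refine measure_mono_ae ?_
        filter_upwards [hsteps] with ω hω hτ
        obtain ⟨hfin, hgt⟩ := hτ
        obtain ⟨j, hj, hpos⟩ := exists_sum_gapDecrement_pos_of_hit hy2 hy hω (hitTime_mem hfin)
        exact Set.mem_iUnion.mpr ⟨_, Set.mem_biUnion (mem_range.mpr (Nat.lt_succ_of_le hj))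
          ⟨hgt, by exact_mod_cast hpos.le⟩⟩
    _ ≤ ∑' m, ∑ j ∈ range (m + 1), μ (E m j) :=
        (measure_iUnion_le _).trans (ENNReal.tsum_le_tsum fun m => measure_biUnion_finset_le _ _)
    _ ≤ _ := ENNReal.tsum_le_tsum fun m => ?_
  split_ifs with h
  · calc ∑ j ∈ range (m + 1), μ (E m j) ≤ ∑ j ∈ range (m + 1), ENNReal.ofReal (q ^ m) :=
          sum_le_sum fun j _ => (measure_mono fun ω hω => hω.2).trans (hchernoff m j)
      _ = ENNReal.ofReal ((m + 1) * q ^ m) := by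
          rw [sum_const, card_range, nsmul_eq_mul, ENNReal.ofReal_mul (by positivity)]
          norm_cast
  · simp [E, h]

end Probability

lemma IncrementsLaw.exists_measure_sum_gapDecrement_nonneg_le {Ω : Type} [MeasurableSpace Ω]
    {μ : Measure Ω} [IsProbabilityMeasure μ] {l1 m1 l2 m2 : ℝ} {I : ℕ → Ω → ℤ × ℤ}
    (hI : IncrementsLaw l1 m1 l2 m2 μ I) (hl1 : 0 < l1) (hm1 : 0 ≤ m1) (hl2 : 0 ≤ l2)
    (hm2 : 0 ≤ m2) (hsum : l1 + l2 + m1 + m2 = 1) (hlm1 : l1 < m1) (hlm2 : l2 < m2) :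
    ∃ q, 0 < q ∧ q < 1 ∧ ∀ m j,
      μ {ω | 0 ≤ ∑ k ∈ range m, (gapDecrement j k (I (k + 1) ω) : ℝ)} ≤ ENNReal.ofReal (q ^ m) := by
  obtain ⟨hmeas, hindep, hlaw⟩ := hI
  obtain ⟨θ, ⟨h1, h2⟩, hθ⟩ := (((eventually_mul_exp_add_mul_exp_neg_lt hlm1).and
    (eventually_mul_exp_add_mul_exp_neg_lt (add_lt_add hlm1 hlm2))).and self_mem_nhdsWithin).exists
  set q := max (l1 * exp θ + m1 * exp (-θ) + l2 + m2) ((l1 + l2) * exp θ + (m1 + m2) * exp (-θ))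
  refine ⟨q, lt_max_of_lt_left (by positivity), max_lt (by linarith) (by linarith), fun m j => ?_⟩
  have hstep : ∀ k, Integrable (fun ω => exp (θ * gapDecrement j k (I (k + 1) ω))) μ ∧
      mgf (fun ω => (gapDecrement j k (I (k + 1) ω) : ℝ)) μ θ ≤ q := by
    intro k
    obtain ⟨hint, hmgf⟩ := HasUnitStepLaw.mgf_comp_eq (hlaw (k + 1)) (hmeas (k + 1)) hl1.le hm1
      hl2 hm2 hsum (gapDecrement j k) θ
    refine ⟨hint, hmgf ▸ ?_⟩
    by_cases hjk : j ≤ k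
    · refine le_max_of_le_right (le_of_eq ?_)
      simp [gapDecrement, hjk]
      ring
    · refine le_max_of_le_left (le_of_eq ?_)
      simp [gapDecrement, hjk]
  have hindep' : iIndepFun (fun k ω => (gapDecrement j k (I (k + 1) ω) : ℝ)) μ :=
    (hindep.precomp (add_left_injective 1)).comp (fun k v => (gapDecrement j k v : ℝ))
      fun k => measurable_of_countable _
  have hmeas' : ∀ k, Measurable fun ω => (gapDecrement j k (I (k + 1) ω) : ℝ) :=
    fun k => (measurable_of_countable fun v => (gapDecrement j k v : ℝ)).comp (hmeas (k + 1))
  simpa using measure_sum_nonneg_le_pow hindep' hmeas' hθ.le (fun k => (hstep k).1)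
    (fun k => (hstep k).2) (range m)

theorem stmt7_general {Ω : Type} [MeasurableSpace Ω] (μ : Measure Ω) [IsProbabilityMeasure μ]
    (l1 m1 l2 m2 : ℝ)
    (hl1 : 0 < l1) (hm1 : 0 < m1) (hl2 : 0 < l2) (hm2 : 0 < m2)
    (hsum : l1 + l2 + m1 + m2 = 1)
    (hρ1 : l1 / m1 < 1) (hρ2 : l2 / m2 < 1)
    (I : ℕ → Ω → ℤ × ℤ) (hI : IncrementsLaw l1 m1 l2 m2 μ I)
    (δ : ℝ) (hδ : 0 < δ) :
    ∃ C2 : ℝ, 0 < C2 ∧ ∀ y : ℤ × ℤ, 0 ≤ y.2 → y.2 < y.1 → ∀ n : ℕ, 1 < n →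
      μ {ω | tauY y (fun k => I k ω) < ⊤ ∧
          (n : ℝ) * C2 < ((tauY y (fun k => I k ω)).toNat : ℝ)} ≤
        ENNReal.ofReal (Real.exp (-δ * n)) := by
  obtain ⟨q, hq0, hq1, hchernoff⟩ := hI.exists_measure_sum_gapDecrement_nonneg_le hl1 hm1.le
    hl2.le hm2.le hsum ((div_lt_one hm1).mp hρ1) ((div_lt_one hm2).mp hρ2)
  have hsteps : ∀ᵐ ω ∂μ, ∀ k, I k ω ∈ unitSteps := ae_all_iff.mpr fun k =>
    HasUnitStepLaw.ae_mem_unitSteps (hI.2.2 k) (hI.1 k) hl1.le hm1.le hl2.le hm2.le hsum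
  obtain ⟨C, hC, htail⟩ := exists_tsum_tail_succ_mul_pow_le_exp hq0 hq1 hδ
  refine ⟨C, hC, fun y hy2 hy n hn => ?_⟩
  exact (measure_tauY_lt_top_and_gt_le hy2 hy hsteps hchernoff _).trans
    (htail n (by exact_mod_cast hn.le))

theorem stmt7 {Ω : Type} [MeasurableSpace Ω] (μ : Measure Ω) [IsProbabilityMeasure μ]
    (l1 m1 l2 m2 : ℝ)
    (hl1 : 0 < l1) (hm1 : 0 < m1) (hl2 : 0 < l2) (hm2 : 0 < m2)
    (hsum : l1 + l2 + m1 + m2 = 1)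
    (hρ1 : l1 / m1 < 1) (hρ2 : l2 / m2 < 1)
    (hord1 : l2 / m2 ≤ (l1 + l2) / (m1 + m2))
    (hord2 : (l1 + l2) / (m1 + m2) ≤ l1 / m1)
    (hneq : l1 / m1 ≠ l2 / m2)
    (hr2 : ((l1 + l2) / (m1 + m2)) ^ 2 < l2 / m2)
    (I : ℕ → Ω → ℤ × ℤ) (hI : IncrementsLaw l1 m1 l2 m2 μ I)
    (δ : ℝ) (hδ : 0 < δ) :
    ∃ C2 : ℝ, 0 < C2 ∧ ∀ y : ℤ × ℤ, 0 ≤ y.2 → y.2 < y.1 → ∀ n : ℕ, 1 < n →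
      μ {ω | tauY y (fun k => I k ω) < ⊤ ∧
          (n : ℝ) * C2 < ((tauY y (fun k => I k ω)).toNat : ℝ)} ≤
        ENNReal.ofReal (Real.exp (-δ * n)) :=
  stmt7_general μ l1 m1 l2 m2 hl1 hm1 hl2 hm2 hsum hρ1 hρ2 I hI δ hδ
end
end

section
/- For every n ≥ 1, the function f_n(x) = max( ρ1^{n−x(1)}, r^{n−x(1)−x(2)}, ρ1^{n−1} ) is subharmonic for the constrained walk X at every x ∈ ℤ≥0² with x(1) + x(2) < n; that is, λ1·f_n(x + π(x,(1,0))) + μ1·f_n(x + π(x,(−1,0))) + λ2·f_n(x + π(x,(0,1))) + μ2·f_n(x + π(x,(0,−1))) ≥ f_n(x) for all such x, where π(x,v) = v if x + v ∈ ℤ≥0² and 0 otherwise. -/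
noncomputable section

/-- `f_n(x) = max( ρ1^{n−x(1)}, r^{n−x(1)−x(2)}, ρ1^{n−1} )`. -/
def fsub (l1 m1 l2 m2 : ℝ) (n : ℤ) (x : ℤ × ℤ) : ℝ :=
  max (max ((l1 / m1) ^ (n - x.1)) (((l1 + l2) / (m1 + m2)) ^ (n - x.1 - x.2)))
    ((l1 / m1) ^ (n - 1))

lemma key_eq (l m : ℝ) (hl : 0 < l) (hm : 0 < m) (e : ℤ) :
    l * (l / m) ^ (e - 1) + m * (l / m) ^ (e + 1) = (l + m) * (l / m) ^ e := by
  have hc : (0:ℝ) < l / m := div_pos hl hm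
  rw [zpow_sub_one₀ hc.ne', zpow_add_one₀ hc.ne']
  field_simp
  ring

lemma zpow_succ_le (c : ℝ) (h0 : 0 < c) (h1 : c ≤ 1) (e : ℤ) :
    c ^ (e + 1) ≤ c ^ e := by
  rw [zpow_add_one₀ h0.ne']
  nlinarith [zpow_pos h0 e]

theorem stmt11 (l1 m1 l2 m2 : ℝ)
    (hl1 : 0 < l1) (hm1 : 0 < m1) (hl2 : 0 < l2) (hm2 : 0 < m2)
    (hsum : l1 + l2 + m1 + m2 = 1)
    (hρ1 : l1 / m1 < 1) (hρ2 : l2 / m2 < 1)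
    (hord1 : l2 / m2 ≤ (l1 + l2) / (m1 + m2))
    (hord2 : (l1 + l2) / (m1 + m2) ≤ l1 / m1) :
    ∀ n : ℕ, 1 ≤ n → ∀ x : ℤ × ℤ, 0 ≤ x.1 → 0 ≤ x.2 → x.1 + x.2 < (n : ℤ) →
      fsub l1 m1 l2 m2 n x ≤
        l1 * fsub l1 m1 l2 m2 n (stepX x (1, 0)) +
          m1 * fsub l1 m1 l2 m2 n (stepX x (-1, 0)) +
          l2 * fsub l1 m1 l2 m2 n (stepX x (0, 1)) +
          m2 * fsub l1 m1 l2 m2 n (stepX x (0, -1)) := by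
  intro n hn x hx1 hx2 hlt
  have hρ0 : (0:ℝ) < l1 / m1 := div_pos hl1 hm1
  have hr0 : (0:ℝ) < (l1 + l2) / (m1 + m2) := div_pos (by linarith) (by linarith)
  have hr1 : (l1 + l2) / (m1 + m2) < 1 := lt_of_le_of_lt hord2 hρ1
  -- step computations
  have s1 : stepX x (1, 0) = (x.1 + 1, x.2) := by
    simp only [stepX, Prod.mk_add_mk]
    rw [if_pos]
    · ext <;> simp
    · constructor <;> simp <;> omega
  have s3 : stepX x (0, 1) = (x.1, x.2 + 1) := by
    simp only [stepX, Prod.mk_add_mk]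
    rw [if_pos]
    · ext <;> simp
    · constructor <;> simp <;> omega
  have s2 : x.1 = 0 → stepX x (-1, 0) = x := by
    intro h
    simp only [stepX, Prod.mk_add_mk]
    rw [if_neg]
    simp; omega
  have s2' : 1 ≤ x.1 → stepX x (-1, 0) = (x.1 - 1, x.2) := by
    intro h
    simp only [stepX, Prod.mk_add_mk]
    rw [if_pos]
    · ext <;> simp <;> ring
    · constructor <;> simp <;> omega
  have s4 : x.2 = 0 → stepX x (0, -1) = x := by
    intro h
    simp only [stepX, Prod.mk_add_mk]
    rw [if_neg]
    simp; omega
  have s4' : 1 ≤ x.2 → stepX x (0, -1) = (x.1, x.2 - 1) := by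
    intro h
    simp only [stepX, Prod.mk_add_mk]
    rw [if_pos]
    · ext <;> simp <;> ring
    · constructor <;> simp <;> omega
  -- generic lower bounds on fsub values
  have hA : ∀ y : ℤ × ℤ, (l1 / m1) ^ ((n:ℤ) - y.1) ≤ fsub l1 m1 l2 m2 n y := by
    intro y; exact le_trans (le_max_left _ _) (le_max_left _ _)
  have hB : ∀ y : ℤ × ℤ,
      ((l1 + l2) / (m1 + m2)) ^ ((n:ℤ) - y.1 - y.2) ≤ fsub l1 m1 l2 m2 n y := by
    intro y; exact le_trans (le_max_right _ _) (le_max_left _ _)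
  have hC : ∀ y : ℤ × ℤ, (l1 / m1) ^ ((n:ℤ) - 1) ≤ fsub l1 m1 l2 m2 n y := by
    intro y; exact le_max_right _ _
  set F1 := fsub l1 m1 l2 m2 n (stepX x (1, 0)) with hF1
  set F2 := fsub l1 m1 l2 m2 n (stepX x (-1, 0)) with hF2
  set F3 := fsub l1 m1 l2 m2 n (stepX x (0, 1)) with hF3
  set F4 := fsub l1 m1 l2 m2 n (stepX x (0, -1)) with hF4
  show max (max ((l1 / m1) ^ ((n:ℤ) - x.1)) (((l1 + l2) / (m1 + m2)) ^ ((n:ℤ) - x.1 - x.2)))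
      ((l1 / m1) ^ ((n:ℤ) - 1)) ≤ l1 * F1 + m1 * F2 + l2 * F3 + m2 * F4
  have hmρ : ∀ e : ℤ, (l1 / m1) ^ (e + 1) ≤ (l1 / m1) ^ e :=
    fun e => zpow_succ_le _ hρ0 hρ1.le e
  have hmr : ∀ e : ℤ, ((l1 + l2) / (m1 + m2)) ^ (e + 1) ≤ ((l1 + l2) / (m1 + m2)) ^ e :=
    fun e => zpow_succ_le _ hr0 hr1.le e
  apply max_le
  apply max_le
  -- Goal 1 : ρ^(n - x.1) ≤ S
  · have b1 : (l1 / m1) ^ ((n:ℤ) - x.1 - 1) ≤ F1 := by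
      have h := hA (x.1 + 1, x.2)
      rw [show (n:ℤ) - (x.1 + 1) = (n:ℤ) - x.1 - 1 from by ring] at h
      rw [hF1, s1]; exact h
    have b3 : (l1 / m1) ^ ((n:ℤ) - x.1) ≤ F3 := by
      rw [hF3, s3]; exact hA (x.1, x.2 + 1)
    have b4 : (l1 / m1) ^ ((n:ℤ) - x.1) ≤ F4 := by
      rcases eq_or_lt_of_le hx2 with h | h
      · rw [hF4, s4 h.symm]; exact hA x
      · rw [hF4, s4' h]; exact hA (x.1, x.2 - 1)
    have h1 := mul_le_mul_of_nonneg_left b1 hl1.le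
    have h3 := mul_le_mul_of_nonneg_left b3 hl2.le
    have h4 := mul_le_mul_of_nonneg_left b4 hm2.le
    have hone : (l1 + m1 + l2 + m2) * (l1 / m1) ^ ((n:ℤ) - x.1)
        = (l1 / m1) ^ ((n:ℤ) - x.1) := by
      rw [show l1 + m1 + l2 + m2 = 1 from by linarith, one_mul]
    rcases eq_or_lt_of_le hx1 with h | h
    · -- x.1 = 0 : reflection at the boundary
      have hx10 : x.1 = 0 := h.symm
      have b2 : (l1 / m1) ^ ((n:ℤ) - 1) ≤ F2 := by
        rw [hF2, s2 hx10]; exact hC x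
      have hmono : (l1 / m1) ^ ((n:ℤ) - x.1) ≤ (l1 / m1) ^ ((n:ℤ) - x.1 - 1) := by
        have h' := hmρ ((n:ℤ) - x.1 - 1)
        rwa [show (n:ℤ) - x.1 - 1 + 1 = (n:ℤ) - x.1 from by ring] at h'
      have hb1' : ((n:ℤ) - x.1 - 1) = ((n:ℤ) - 1) := by omega
      rw [hb1'] at h1 hmono
      have h2 := mul_le_mul_of_nonneg_left b2 hm1.le
      have hprod : (l1 + m1) * (l1 / m1) ^ ((n:ℤ) - x.1)
          ≤ (l1 + m1) * (l1 / m1) ^ ((n:ℤ) - 1) :=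
        mul_le_mul_of_nonneg_left hmono (by linarith)
      linarith
    · -- x.1 ≥ 1 : interior, exact balance
      have key := key_eq l1 m1 hl1 hm1 ((n:ℤ) - x.1)
      have b2 : (l1 / m1) ^ ((n:ℤ) - x.1 + 1) ≤ F2 := by
        have hh := hA (x.1 - 1, x.2)
        rw [show (n:ℤ) - (x.1 - 1) = (n:ℤ) - x.1 + 1 from by ring] at hh
        rw [hF2, s2' h]; exact hh
      have h2 := mul_le_mul_of_nonneg_left b2 hm1.le
      linarith
  -- Goal 2 : r^(n - x.1 - x.2) ≤ S
  · have key := key_eq (l1 + l2) (m1 + m2) (by linarith) (by linarith) ((n:ℤ) - x.1 - x.2)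
    have b1 : ((l1 + l2) / (m1 + m2)) ^ ((n:ℤ) - x.1 - x.2 - 1) ≤ F1 := by
      have h := hB (x.1 + 1, x.2)
      rw [show (n:ℤ) - (x.1 + 1) - x.2 = (n:ℤ) - x.1 - x.2 - 1 from by ring] at h
      rw [hF1, s1]; exact h
    have b3 : ((l1 + l2) / (m1 + m2)) ^ ((n:ℤ) - x.1 - x.2 - 1) ≤ F3 := by
      have h := hB (x.1, x.2 + 1)
      rw [show (n:ℤ) - x.1 - (x.2 + 1) = (n:ℤ) - x.1 - x.2 - 1 from by ring] at h
      rw [hF3, s3]; exact h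
    have h1 := mul_le_mul_of_nonneg_left b1 hl1.le
    have h3 := mul_le_mul_of_nonneg_left b3 hl2.le
    have hb := hmr ((n:ℤ) - x.1 - x.2)
    have hone : (l1 + l2 + m1 + m2) * ((l1 + l2) / (m1 + m2)) ^ ((n:ℤ) - x.1 - x.2)
        = ((l1 + l2) / (m1 + m2)) ^ ((n:ℤ) - x.1 - x.2) := by
      rw [hsum, one_mul]
    have hbm1 := mul_le_mul_of_nonneg_left hb hm1.le
    have hbm2 := mul_le_mul_of_nonneg_left hb hm2.le
    have b2 : m1 * ((l1 + l2) / (m1 + m2)) ^ ((n:ℤ) - x.1 - x.2 + 1) ≤ m1 * F2 := by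
      rcases eq_or_lt_of_le hx1 with h | h
      · have hx10 : x.1 = 0 := h.symm
        refine le_trans hbm1 (mul_le_mul_of_nonneg_left ?_ hm1.le)
        rw [hF2, s2 hx10]; exact hB x
      · refine mul_le_mul_of_nonneg_left ?_ hm1.le
        have hh := hB (x.1 - 1, x.2)
        rw [show (n:ℤ) - (x.1 - 1) - x.2 = (n:ℤ) - x.1 - x.2 + 1 from by ring] at hh
        rw [hF2, s2' h]; exact hh
    have b4 : m2 * ((l1 + l2) / (m1 + m2)) ^ ((n:ℤ) - x.1 - x.2 + 1) ≤ m2 * F4 := by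
      rcases eq_or_lt_of_le hx2 with h | h
      · refine le_trans hbm2 (mul_le_mul_of_nonneg_left ?_ hm2.le)
        rw [hF4, s4 h.symm]; exact hB x
      · refine mul_le_mul_of_nonneg_left ?_ hm2.le
        have hh := hB (x.1, x.2 - 1)
        rw [show (n:ℤ) - x.1 - (x.2 - 1) = (n:ℤ) - x.1 - x.2 + 1 from by ring] at hh
        rw [hF4, s4' h]; exact hh
    linarith
  -- Goal 3 : ρ^(n-1) ≤ S
  · have c1 := mul_le_mul_of_nonneg_left (hC (stepX x (1, 0))) hl1.le
    have c2 := mul_le_mul_of_nonneg_left (hC (stepX x (-1, 0))) hm1.le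
    have c3 := mul_le_mul_of_nonneg_left (hC (stepX x (0, 1))) hl2.le
    have c4 := mul_le_mul_of_nonneg_left (hC (stepX x (0, -1))) hm2.le
    have hone : (l1 + m1 + l2 + m2) * (l1 / m1) ^ ((n:ℤ) - 1)
        = (l1 / m1) ^ ((n:ℤ) - 1) := by
      rw [show l1 + m1 + l2 + m2 = 1 from by linarith, one_mul]
    linarith
end
end

section
/- Assume additionally that ρ1·ρ2 = r². Then for every y ∈ ℤ × ℤ≥0 with y(1) ≥ y(2), P_y( τ < ∞ ) = r^{y(1)−y(2)} + ( r·(1−r)/(r−ρ2) )·( ρ1^{y(1)} − r^{y(1)−y(2)}·ρ1^{y(2)} ). -/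
open MeasureTheory ProbabilityTheory Filter

noncomputable section

/-!
The candidate is `h(a, b) = r ^ (a - b) + c * (ρ₁ ^ a - r ^ (a - b) * ρ₁ ^ b)`. Each of
`r ^ a * r⁻¹ ^ b`, `ρ₁ ^ a` and `r ^ a * (ρ₁ / r) ^ b` has the form `x ^ a * z ^ b` with
`λ₁ / x + μ₁ x + λ₂ z + μ₂ / z = 1`, hence is harmonic for the unreflected walk; for the last
one this is exactly `ρ₁ ρ₂ = r²`. The constant `c` is the one making `h(a, -1) = h(a, 0)`, which
is harmonicity at the reflecting boundary `b = 0`. Since `h = 1` on the diagonal, the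
probability of hitting the diagonal within `N` steps is `h(y) - E_y[h(Y_N); τ > N]`.

The error term tends to zero: `h ≤ (1 + c) ρ₁ ^ (a - b)` is small far from the diagonal, while
from distance `< M` the walk hits the diagonal within `M` steps with probability at least
`λ₁ ^ M` (by moving left), so `λ₁ ^ M P(τ ≥ n, Y_n is that close) ≤ P(τ ≥ n) - P(τ ≥ n + M)`,
which tends to zero because `P(τ ≥ n)` converges.
-/

open Finset Topology

section KilledWalk

variable {S α : Type*} (step : S → α → S) (V : Finset α) (p : α → ℝ) (A : Set S)
  [DecidablePred (· ∈ A)]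

def hitProb : ℕ → S → ℝ
  | 0, s => if s ∈ A then 1 else 0
  | N + 1, s => if s ∈ A then 1 else ∑ v ∈ V, p v * hitProb N (step s v)

/-- For the walk `X` with steps `p`, `(killedStep ^ n) f s = E_s[f(X_n); X_0, …, X_{n-1} ∉ A]`. -/
def killedStep : Module.End ℝ (S → ℝ) where
  toFun f s := if s ∈ A then 0 else ∑ v ∈ V, p v * f (step s v)
  map_add' f g := by ext s; by_cases hs : s ∈ A <;> simp [hs, mul_add, sum_add_distrib]
  map_smul' c f := by ext s; by_cases hs : s ∈ A <;> simp [hs, mul_sum, mul_left_comm]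

variable {step V p A} {G : Set S}

lemma hitProb_nonneg (hp : ∀ v ∈ V, 0 ≤ p v) (N : ℕ) (s : S) :
    0 ≤ hitProb step V p A N s := by
  induction N generalizing s with
  | zero => simp only [hitProb]; split_ifs <;> norm_num
  | succ N ih =>
    simp only [hitProb]
    split_ifs
    · exact zero_le_one
    · exact sum_nonneg fun v hv => mul_nonneg (hp v hv) (ih _)

lemma killedStep_apply (f : S → ℝ) (s : S) :
    killedStep step V p A f s = if s ∈ A then 0 else ∑ v ∈ V, p v * f (step s v) :=
  rfl

lemma killedStep_pow_succ_apply (n : ℕ) (f : S → ℝ) :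
    (killedStep step V p A ^ (n + 1)) f =
      killedStep step V p A ((killedStep step V p A ^ n) f) := by
  rw [pow_succ', Module.End.mul_apply]

lemma killedStep_pow_mono (hp : ∀ v ∈ V, 0 ≤ p v)
    (hG : ∀ s ∈ G, s ∉ A → ∀ v ∈ V, step s v ∈ G) {f g : S → ℝ} (hfg : ∀ s ∈ G, f s ≤ g s)
    (n : ℕ) : ∀ s ∈ G, (killedStep step V p A ^ n) f s ≤ (killedStep step V p A ^ n) g s := by
  induction n with
  | zero => exact hfg
  | succ n ih =>
    intro s hs
    simp only [killedStep_pow_succ_apply, killedStep_apply]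
    split_ifs with hsA
    · rfl
    · exact sum_le_sum fun v hv =>
        mul_le_mul_of_nonneg_left (ih _ (hG s hs hsA v hv)) (hp v hv)

lemma killedStep_pow_nonneg (hp : ∀ v ∈ V, 0 ≤ p v)
    (hG : ∀ s ∈ G, s ∉ A → ∀ v ∈ V, step s v ∈ G) {f : S → ℝ} (hf : ∀ s ∈ G, 0 ≤ f s)
    (n : ℕ) {s : S} (hs : s ∈ G) : 0 ≤ (killedStep step V p A ^ n) f s := by
  simpa using killedStep_pow_mono hp hG (f := 0) hf n s hs

lemma killedStep_pow_one_le (hp : ∀ v ∈ V, 0 ≤ p v) (hp1 : ∑ v ∈ V, p v = 1)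
    (hG : ∀ s ∈ G, s ∉ A → ∀ v ∈ V, step s v ∈ G) (n : ℕ) :
    ∀ s ∈ G, (killedStep step V p A ^ n) 1 s ≤ 1 := by
  induction n with
  | zero => simp
  | succ n ih =>
    intro s hs
    simp only [killedStep_pow_succ_apply, killedStep_apply]
    split_ifs with hsA
    · exact zero_le_one
    · calc ∑ v ∈ V, p v * (killedStep step V p A ^ n) 1 (step s v)
          ≤ ∑ v ∈ V, p v := sum_le_sum fun v hv =>
            mul_le_of_le_one_right (hp v hv) (ih _ (hG s hs hsA v hv))
        _ = 1 := hp1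

lemma killedStep_pow_succ_one_le (hp : ∀ v ∈ V, 0 ≤ p v) (hp1 : ∑ v ∈ V, p v = 1)
    (hG : ∀ s ∈ G, s ∉ A → ∀ v ∈ V, step s v ∈ G) (n : ℕ) {s : S} (hs : s ∈ G) :
    (killedStep step V p A ^ (n + 1)) 1 s ≤ (killedStep step V p A ^ n) 1 s := by
  rw [pow_succ, Module.End.mul_apply]
  exact killedStep_pow_mono hp hG
    (fun t ht => by simpa using killedStep_pow_one_le hp hp1 hG 1 t ht) n s hs

/-- Repeating the move `v₀` reaches `A` within `M` steps. -/
lemma killedStep_pow_one_le_one_sub (hp : ∀ v ∈ V, 0 ≤ p v) (hp1 : ∑ v ∈ V, p v = 1)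
    (hG : ∀ s ∈ G, s ∉ A → ∀ v ∈ V, step s v ∈ G) {v₀ : α} (hv₀ : v₀ ∈ V) {dist : S → ℕ}
    (hdist : ∀ s ∈ G, s ∉ A → dist (step s v₀) < dist s) (M : ℕ) :
    ∀ s ∈ G, dist s < M → (killedStep step V p A ^ M) 1 s ≤ 1 - p v₀ ^ M := by
  have hq1 : p v₀ ≤ 1 := hp1 ▸ single_le_sum hp hv₀
  induction M with
  | zero => intro s _ h; omega
  | succ M ih =>
    intro s hs hsM
    simp only [killedStep_pow_succ_apply, killedStep_apply]
    split_ifs with hsA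
    · exact sub_nonneg.2 (pow_le_one₀ (hp v₀ hv₀) hq1)
    · set g := fun v => (killedStep step V p A ^ M) 1 (step s v)
      have hg : ∀ v ∈ V, g v ≤ 1 := fun v hv =>
        killedStep_pow_one_le hp hp1 hG M _ (hG s hs hsA v hv)
      have hgv₀ : g v₀ ≤ 1 - p v₀ ^ M :=
        ih _ (hG s hs hsA v₀ hv₀) (by have := hdist s hs hsA; omega)
      have hsingle : p v₀ * (1 - g v₀) ≤ ∑ v ∈ V, p v * (1 - g v) :=
        single_le_sum (f := fun v => p v * (1 - g v))
          (fun v hv => mul_nonneg (hp v hv) (sub_nonneg.2 (hg v hv))) hv₀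
      have hsum : ∑ v ∈ V, p v * (1 - g v) = 1 - ∑ v ∈ V, p v * g v := by
        simp only [mul_sub, mul_one, sum_sub_distrib, hp1]
      have : p v₀ ^ M * p v₀ ≤ p v₀ * (1 - g v₀) := by
        rw [mul_comm]; exact mul_le_mul_of_nonneg_left (by linarith) (hp v₀ hv₀)
      rw [pow_succ]
      linarith

lemma tendsto_killedStep_pow_indicator_dist_lt (hp : ∀ v ∈ V, 0 ≤ p v)
    (hp1 : ∑ v ∈ V, p v = 1) (hG : ∀ s ∈ G, s ∉ A → ∀ v ∈ V, step s v ∈ G) {v₀ : α}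
    (hv₀ : v₀ ∈ V) (hq : 0 < p v₀) {dist : S → ℕ}
    (hdist : ∀ s ∈ G, s ∉ A → dist (step s v₀) < dist s) (M : ℕ) {s : S} (hs : s ∈ G) :
    Tendsto (fun n => (killedStep step V p A ^ n) ({t | dist t < M}.indicator 1) s) atTop
      (𝓝 0) := by
  set T := killedStep step V p A
  set near := {t | dist t < M}.indicator (1 : S → ℝ)
  set a : ℕ → ℝ := fun n => (T ^ n) 1 s
  have ha : Tendsto a atTop (𝓝 (⨅ n, a n)) :=
    tendsto_atTop_ciInf
      (antitone_nat_of_succ_le fun n => killedStep_pow_succ_one_le hp hp1 hG n hs)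
      ⟨0, by rintro _ ⟨n, rfl⟩; exact killedStep_pow_nonneg hp hG (fun _ _ => zero_le_one) n hs⟩
  have hdrop : ∀ n, p v₀ ^ M * (T ^ n) near s ≤ a n - a (n + M) := by
    intro n
    have hM : ∀ t ∈ G, (T ^ M) 1 t ≤ (1 + (-p v₀ ^ M) • near) t := by
      intro t ht
      by_cases htM : dist t < M
      · simpa [near, htM, sub_eq_add_neg] using
          killedStep_pow_one_le_one_sub hp hp1 hG hv₀ hdist M t ht htM
      · simpa [near, htM] using killedStep_pow_one_le hp hp1 hG M t ht
    have := killedStep_pow_mono hp hG hM n s hs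
    rw [map_add, map_smul, Pi.add_apply, Pi.smul_apply, smul_eq_mul, ← Module.End.mul_apply,
      ← pow_add] at this
    simp only [a]
    linarith
  have hlim : Tendsto (fun n => (a n - a (n + M)) / p v₀ ^ M) atTop (𝓝 0) := by
    simpa using (ha.sub (ha.comp (tendsto_add_atTop_nat M))).div_const (p v₀ ^ M)
  refine squeeze_zero (fun n => killedStep_pow_nonneg hp hG
    (fun t _ => Set.indicator_nonneg (fun _ _ => zero_le_one) t) n hs) (fun n => ?_) hlim
  rw [le_div_iff₀ (pow_pos hq M), mul_comm]
  exact hdrop n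

lemma tendsto_killedStep_pow_nhds_zero (hp : ∀ v ∈ V, 0 ≤ p v) (hp1 : ∑ v ∈ V, p v = 1)
    (hG : ∀ s ∈ G, s ∉ A → ∀ v ∈ V, step s v ∈ G) {v₀ : α} (hv₀ : v₀ ∈ V) (hq : 0 < p v₀)
    {dist : S → ℕ} (hdist : ∀ s ∈ G, s ∉ A → dist (step s v₀) < dist s)
    {f : S → ℝ} {C ρ : ℝ} (hC : 0 ≤ C) (hρ0 : 0 ≤ ρ) (hρ1 : ρ < 1)
    (hf0 : ∀ s ∈ G, 0 ≤ f s) (hfC : ∀ s ∈ G, f s ≤ C * ρ ^ dist s) {s : S} (hs : s ∈ G) :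
    Tendsto (fun n => (killedStep step V p A ^ n) f s) atTop (𝓝 0) := by
  set T := killedStep step V p A
  have hbound : ∀ M n,
      (T ^ n) f s ≤ C * ρ ^ M + C * (T ^ n) ({t | dist t < M}.indicator 1) s := by
    intro M n
    have hfM : ∀ t ∈ G,
        f t ≤ ((C * ρ ^ M) • 1 + C • {t | dist t < M}.indicator 1 : S → ℝ) t := by
      intro t ht
      by_cases htM : dist t < M
      · have : ρ ^ dist t ≤ 1 := pow_le_one₀ hρ0 hρ1.le
        simp only [Pi.add_apply, Pi.smul_apply, Pi.one_apply, smul_eq_mul, mul_one,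
          Set.indicator_of_mem (show t ∈ {t | dist t < M} from htM)]
        nlinarith [hfC t ht, pow_nonneg hρ0 M]
      · have : ρ ^ dist t ≤ ρ ^ M := pow_le_pow_of_le_one hρ0 hρ1.le (by omega)
        simp only [Pi.add_apply, Pi.smul_apply, Pi.one_apply, smul_eq_mul, mul_one, mul_zero,
          add_zero, Set.indicator_of_notMem (show t ∉ {t | dist t < M} from htM)]
        nlinarith [hfC t ht]
    have := killedStep_pow_mono hp hG hfM n s hs
    rw [map_add, map_smul, map_smul, Pi.add_apply, Pi.smul_apply, Pi.smul_apply, smul_eq_mul,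
      smul_eq_mul] at this
    have ha1 : (T ^ n) 1 s ≤ 1 := killedStep_pow_one_le hp hp1 hG n s hs
    nlinarith [mul_nonneg hC (pow_nonneg hρ0 M)]
  refine tendsto_order.2 ⟨fun ε hε => Eventually.of_forall fun n =>
    hε.trans_le (killedStep_pow_nonneg hp hG hf0 n hs), fun ε hε => ?_⟩
  have hgeom : Tendsto (fun M => C * ρ ^ M) atTop (𝓝 0) := by
    simpa using (tendsto_pow_atTop_nhds_zero_of_lt_one hρ0 hρ1).const_mul C
  obtain ⟨M, hM⟩ := (hgeom.eventually (gt_mem_nhds (half_pos hε))).exists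
  have hnear :=
    (tendsto_killedStep_pow_indicator_dist_lt hp hp1 hG hv₀ hq hdist M hs).const_mul C
  rw [mul_zero] at hnear
  filter_upwards [hnear.eventually (gt_mem_nhds (half_pos hε))] with n hn
  linarith [hbound M n]

lemma hitProb_add_killedStep_pow (hG : ∀ s ∈ G, s ∉ A → ∀ v ∈ V, step s v ∈ G) {h : S → ℝ}
    (hA : ∀ s ∈ A, h s = 1) (hh : ∀ s ∈ G, s ∉ A → ∑ v ∈ V, p v * h (step s v) = h s)
    (N : ℕ) : ∀ s ∈ G,
      hitProb step V p A N s + (killedStep step V p A ^ N) (Aᶜ.indicator h) s = h s := by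
  induction N with
  | zero =>
    intro s _
    by_cases hsA : s ∈ A <;> simp [hitProb, hsA, hA]
  | succ N ih =>
    intro s hs
    simp only [hitProb, killedStep_pow_succ_apply, killedStep_apply]
    split_ifs with hsA
    · rw [hA s hsA, add_zero]
    · rw [← sum_add_distrib, ← hh s hs hsA]
      exact sum_congr rfl fun v hv => by rw [← mul_add, ih _ (hG s hs hsA v hv)]

lemma tendsto_hitProb (hp : ∀ v ∈ V, 0 ≤ p v) (hp1 : ∑ v ∈ V, p v = 1)
    (hG : ∀ s ∈ G, s ∉ A → ∀ v ∈ V, step s v ∈ G) {v₀ : α} (hv₀ : v₀ ∈ V) (hq : 0 < p v₀)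
    {dist : S → ℕ} (hdist : ∀ s ∈ G, s ∉ A → dist (step s v₀) < dist s) {h : S → ℝ}
    (hA : ∀ s ∈ A, h s = 1) (hh : ∀ s ∈ G, s ∉ A → ∑ v ∈ V, p v * h (step s v) = h s)
    {C ρ : ℝ} (hC : 0 ≤ C) (hρ0 : 0 ≤ ρ) (hρ1 : ρ < 1)
    (h0 : ∀ s ∈ G, 0 ≤ h s) (hhC : ∀ s ∈ G, h s ≤ C * ρ ^ dist s) {s : S} (hs : s ∈ G) :
    Tendsto (fun N => hitProb step V p A N s) atTop (𝓝 (h s)) := by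
  have hf0 : ∀ t ∈ G, 0 ≤ Aᶜ.indicator h t := fun t ht =>
    Set.indicator_nonneg (fun _ _ => h0 t ht) t
  have hfC : ∀ t ∈ G, Aᶜ.indicator h t ≤ C * ρ ^ dist t := fun t ht => by
    by_cases htA : t ∈ A
    · simpa [htA] using mul_nonneg hC (pow_nonneg hρ0 _)
    · simpa [htA] using hhC t ht
  have hlim := (tendsto_killedStep_pow_nhds_zero hp hp1 hG hv₀ hq hdist hC hρ0 hρ1 hf0 hfC
    hs).const_sub (h s)
  rw [sub_zero] at hlim
  refine hlim.congr fun N => ?_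
  linarith [hitProb_add_killedStep_pow hG hA hh N s hs]

end KilledWalk

section WalkLaw

variable {S α : Type*} (step : S → α → S) (A : Set S)

def walk (s : S) (inc : ℕ → α) : ℕ → S
  | 0 => s
  | k + 1 => step (walk s inc k) (inc (k + 1))

def HitsWithin : (N : ℕ) → S → (Fin N → α) → Prop
  | 0, s, _ => s ∈ A
  | N + 1, s, w => s ∈ A ∨ HitsWithin N (step s (w 0)) (Fin.tail w)

variable {step A}

lemma walk_succ_eq_walk_shift (s : S) (inc : ℕ → α) (n : ℕ) :
    walk step s inc (n + 1) = walk step (step s (inc 1)) (fun k => inc (k + 1)) n := by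
  induction n with
  | zero => rfl
  | succ n ih => exact congrArg (step · _) ih

lemma exists_walk_mem_iff_hitsWithin (N : ℕ) (s : S) (inc : ℕ → α) :
    (∃ n ≤ N, walk step s inc n ∈ A) ↔ HitsWithin step A N s (fun i => inc (i + 1)) := by
  induction N generalizing s inc with
  | zero => simp [HitsWithin, walk]
  | succ N ih =>
    rw [HitsWithin]
    change _ ↔ s ∈ A ∨ HitsWithin step A N (step s (inc 1)) (fun i : Fin N => inc (i + 1 + 1))
    rw [← ih (step s (inc 1)) (fun k => inc (k + 1))]
    constructor
    · rintro ⟨_ | n, hn, hmem⟩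
      · exact Or.inl hmem
      · exact Or.inr ⟨n, by omega, by rwa [walk_succ_eq_walk_shift] at hmem⟩
    · rintro (hmem | ⟨n, hn, hmem⟩)
      · exact ⟨0, by omega, hmem⟩
      · exact ⟨n + 1, by omega, by rwa [walk_succ_eq_walk_shift]⟩

variable [MeasurableSpace α] [MeasurableSingletonClass α]

lemma lintegral_eq_sum_of_sum_measure_singleton {ν : Measure α} [IsProbabilityMeasure ν]
    {V : Finset α} (hV : ∑ v ∈ V, ν {v} = 1) (f : α → ENNReal) :
    ∫⁻ v, f v ∂ν = ∑ v ∈ V, f v * ν {v} := by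
  have hcompl : ν (↑V)ᶜ = 0 := by
    rw [measure_compl V.measurableSet (measure_ne_top _ _), measure_univ,
      ← sum_measure_singleton, hV, tsub_self]
  rw [← lintegral_finset, Measure.restrict_eq_self_of_ae_mem (ae_iff.2 hcompl)]

variable [Countable α] [DecidablePred (· ∈ A)] {V : Finset α} {p : α → ℝ}

lemma measure_pi_hitsWithin (hp : ∀ v ∈ V, 0 ≤ p v) (hp1 : ∑ v ∈ V, p v = 1) (N : ℕ)
    (ν : Fin N → Measure α) [∀ i, IsProbabilityMeasure (ν i)]
    (hν : ∀ i, ∀ v ∈ V, ν i {v} = ENNReal.ofReal (p v)) (s : S) :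
    Measure.pi ν {w | HitsWithin step A N s w} = ENNReal.ofReal (hitProb step V p A N s) := by
  induction N generalizing s with
  | zero => by_cases hs : s ∈ A <;> simp [HitsWithin, hitProb, hs]
  | succ N ih =>
    by_cases hs : s ∈ A
    · simp [HitsWithin, hitProb, hs]
    have hset : {w | HitsWithin step A (N + 1) s w} =
        MeasurableEquiv.piFinSuccAbove (fun _ => α) 0 ⁻¹'
          {x | HitsWithin step A N (step s x.1) x.2} := by
      ext w
      simp [HitsWithin, hs]
    have hν0 : ∑ v ∈ V, ν 0 {v} = 1 := by
      rw [sum_congr rfl (hν 0), ← ENNReal.ofReal_sum_of_nonneg hp, hp1, ENNReal.ofReal_one]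
    rw [hset, (measurePreserving_piFinSuccAbove ν 0).measure_preimage
      (Set.to_countable _).measurableSet.nullMeasurableSet,
      Measure.prod_apply (Set.to_countable _).measurableSet,
      lintegral_eq_sum_of_sum_measure_singleton hν0, hitProb, if_neg hs,
      ENNReal.ofReal_sum_of_nonneg fun v hv => mul_nonneg (hp v hv) (hitProb_nonneg hp _ _)]
    refine sum_congr rfl fun v hv => ?_
    rw [show Prod.mk v ⁻¹' {x | HitsWithin step A N (step s x.1) x.2} =
      {w | HitsWithin step A N (step s v) w} from rfl, ih _ (fun i => hν _), hν 0 v hv,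
      ← ENNReal.ofReal_mul (hitProb_nonneg hp _ _), mul_comm]

lemma measure_exists_walk_mem_le {Ω : Type*} [MeasurableSpace Ω] {μ : Measure Ω}
    {I : ℕ → Ω → α} (hI : ∀ k, Measurable (I k)) (hind : iIndepFun I μ)
    (hlaw : ∀ k, ∀ v ∈ V, μ (I k ⁻¹' {v}) = ENNReal.ofReal (p v))
    (hp : ∀ v ∈ V, 0 ≤ p v) (hp1 : ∑ v ∈ V, p v = 1) (N : ℕ) (s : S) :
    μ {ω | ∃ n ≤ N, walk step s (fun k => I k ω) n ∈ A} =
      ENNReal.ofReal (hitProb step V p A N s) := by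
  have := hind.isProbabilityMeasure
  have := fun i : Fin N => Measure.isProbabilityMeasure_map (μ := μ) (hI (i + 1)).aemeasurable
  set X : Ω → Fin N → α := fun ω i => I (i + 1) ω
  have hX : Measurable X := measurable_pi_lambda _ fun i => hI _
  have hlawX : μ.map X = Measure.pi fun i : Fin N => μ.map (I (i + 1)) :=
    iIndepFun.map_fun_eq_pi_map (f := fun i : Fin N => I (i + 1)) (fun i => (hI _).aemeasurable)
      (hind.precomp fun i j h => Fin.ext (by simpa using h))
  have hset : {ω | ∃ n ≤ N, walk step s (fun k => I k ω) n ∈ A} =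
      X ⁻¹' {w | HitsWithin step A N s w} := by
    ext ω
    exact exists_walk_mem_iff_hitsWithin N s _
  rw [hset, ← Measure.map_apply hX (Set.to_countable _).measurableSet, hlawX]
  refine measure_pi_hitsWithin hp hp1 N _ (fun i v hv => ?_) s
  rw [Measure.map_apply (hI _) (measurableSet_singleton v)]
  exact hlaw _ v hv

lemma measure_exists_walk_mem {Ω : Type*} [MeasurableSpace Ω] {μ : Measure Ω}
    {I : ℕ → Ω → α} (hI : ∀ k, Measurable (I k)) (hind : iIndepFun I μ)
    (hlaw : ∀ k, ∀ v ∈ V, μ (I k ⁻¹' {v}) = ENNReal.ofReal (p v))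
    (hp : ∀ v ∈ V, 0 ≤ p v) (hp1 : ∑ v ∈ V, p v = 1) {s : S} {L : ℝ}
    (hlim : Tendsto (fun N => hitProb step V p A N s) atTop (𝓝 L)) :
    μ {ω | ∃ n, walk step s (fun k => I k ω) n ∈ A} = ENNReal.ofReal L := by
  have hset : {ω | ∃ n, walk step s (fun k => I k ω) n ∈ A} =
      ⋃ N, {ω | ∃ n ≤ N, walk step s (fun k => I k ω) n ∈ A} := by
    ext ω
    simp only [Set.mem_ofPred_eq, Set.mem_iUnion]
    exact ⟨fun ⟨n, hn⟩ => ⟨n, n, le_rfl, hn⟩, fun ⟨_, n, _, hn⟩ => ⟨n, hn⟩⟩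
  have hmono : Monotone fun N => {ω | ∃ n ≤ N, walk step s (fun k => I k ω) n ∈ A} :=
    fun _ _ hNM _ ⟨n, hn, hmem⟩ => ⟨n, hn.trans hNM, hmem⟩
  rw [hset]
  refine tendsto_nhds_unique (tendsto_measure_iUnion_atTop hmono) ?_
  simp only [Function.comp_def, measure_exists_walk_mem_le hI hind hlaw hp hp1]
  exact (ENNReal.continuous_ofReal.tendsto L).comp hlim

end WalkLaw

section ReflectedWalk

def reflStep (y v : ℤ × ℤ) : ℤ × ℤ := stepY y (-v.1, v.2)

lemma pathY_eq_walk (y : ℤ × ℤ) (inc : ℕ → ℤ × ℤ) : pathY y inc = walk reflStep y inc := by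
  funext n
  induction n with
  | zero => rfl
  | succ n ih => rw [pathY, walk, ih, reflStep]

lemma hitTime_lt_top_iff {A : Set (ℤ × ℤ)} {path : ℕ → ℤ × ℤ} :
    hitTime A path < ⊤ ↔ ∃ n, path n ∈ A := by
  simp [hitTime, sInf_lt_iff]

def moves : Finset (ℤ × ℤ) := {(1, 0), (-1, 0), (0, 1), (0, -1)}

def moveWeight (l1 m1 l2 m2 : ℝ) (v : ℤ × ℤ) : ℝ :=
  if v = (1, 0) then l1 else if v = (-1, 0) then m1 else if v = (0, 1) then l2 else m2

def wedge : Set (ℤ × ℤ) := {y | 0 ≤ y.2 ∧ y.2 ≤ y.1}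

variable {l1 m1 l2 m2 : ℝ}

lemma sum_moves_moveWeight_mul (g : ℤ × ℤ → ℝ) :
    ∑ v ∈ moves, moveWeight l1 m1 l2 m2 v * g v =
      l1 * g (1, 0) + m1 * g (-1, 0) + l2 * g (0, 1) + m2 * g (0, -1) := by
  simp [moves, moveWeight, add_assoc]

lemma moveWeight_nonneg (hl1 : 0 ≤ l1) (hm1 : 0 ≤ m1) (hl2 : 0 ≤ l2) (hm2 : 0 ≤ m2) :
    ∀ v ∈ moves, 0 ≤ moveWeight l1 m1 l2 m2 v := by
  intro v _
  unfold moveWeight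
  split_ifs <;> assumption

lemma sum_moveWeight (hsum : l1 + l2 + m1 + m2 = 1) :
    ∑ v ∈ moves, moveWeight l1 m1 l2 m2 v = 1 := by
  simpa using (sum_moves_moveWeight_mul (l1 := l1) (m1 := m1) (l2 := l2) (m2 := m2)
    fun _ => 1).trans (by linarith)

lemma IncrementsLaw.measure_preimage_singleton {Ω : Type} [MeasurableSpace Ω]
    {μ : Measure Ω} {I : ℕ → Ω → ℤ × ℤ} (hI : IncrementsLaw l1 m1 l2 m2 μ I) (k : ℕ) :
    ∀ v ∈ moves, μ (I k ⁻¹' {v}) = ENNReal.ofReal (moveWeight l1 m1 l2 m2 v) := by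
  obtain ⟨h₁, h₂, h₃, h₄⟩ := hI.2.2 k
  simp only [moves, mem_insert, mem_singleton]
  rintro v (rfl | rfl | rfl | rfl) <;> simpa [moveWeight]

lemma reflStep_one_zero {y : ℤ × ℤ} (hy : 0 ≤ y.2) : reflStep y (1, 0) = (y.1 - 1, y.2) := by
  simp [reflStep, stepY, hy, sub_eq_add_neg, Prod.ext_iff]

lemma reflStep_neg_one_zero {y : ℤ × ℤ} (hy : 0 ≤ y.2) :
    reflStep y (-1, 0) = (y.1 + 1, y.2) := by
  simp [reflStep, stepY, hy, Prod.ext_iff]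

lemma reflStep_zero_one {y : ℤ × ℤ} (hy : 0 ≤ y.2) : reflStep y (0, 1) = (y.1, y.2 + 1) := by
  simp [reflStep, stepY, show 0 ≤ y.2 + 1 by omega, Prod.ext_iff]

lemma reflStep_zero_neg_one {y : ℤ × ℤ} (hy : 0 ≤ y.2) :
    reflStep y (0, -1) = (y.1, max (y.2 - 1) 0) := by
  rcases hy.eq_or_lt with h | h
  · simp [reflStep, stepY, ← h, Prod.ext_iff]
  · simp [reflStep, stepY, show 0 ≤ y.2 + -1 by omega, sub_eq_add_neg, Prod.ext_iff]

lemma sum_moves_moveWeight_mul_reflStep (g : ℤ × ℤ → ℝ) {y : ℤ × ℤ} (hy : 0 ≤ y.2) :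
    ∑ v ∈ moves, moveWeight l1 m1 l2 m2 v * g (reflStep y v) =
      l1 * g (y.1 - 1, y.2) + m1 * g (y.1 + 1, y.2) + l2 * g (y.1, y.2 + 1) +
        m2 * g (y.1, max (y.2 - 1) 0) := by
  rw [sum_moves_moveWeight_mul, reflStep_one_zero hy, reflStep_neg_one_zero hy,
    reflStep_zero_one hy, reflStep_zero_neg_one hy]

lemma reflStep_mem_wedge {y : ℤ × ℤ} (hy : y ∈ wedge) (hne : y.1 ≠ y.2) :
    ∀ v ∈ moves, reflStep y v ∈ wedge := by
  obtain ⟨h2, h12⟩ := hy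
  simp only [moves, mem_insert, mem_singleton]
  rintro v (rfl | rfl | rfl | rfl)
  · rw [reflStep_one_zero h2]; exact ⟨h2, by simp; omega⟩
  · rw [reflStep_neg_one_zero h2]; exact ⟨h2, by simp; omega⟩
  · rw [reflStep_zero_one h2]; exact ⟨by simp; omega, by simp; omega⟩
  · rw [reflStep_zero_neg_one h2]; exact ⟨by simp, by simp; omega⟩

lemma toNat_sub_reflStep_one_zero_lt {y : ℤ × ℤ} (hy : y ∈ wedge) (hne : y.1 ≠ y.2) :
    ((reflStep y (1, 0)).1 - (reflStep y (1, 0)).2).toNat < (y.1 - y.2).toNat := by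
  obtain ⟨h2, h12⟩ := hy
  rw [reflStep_one_zero h2]
  simp only
  omega

lemma exists_natCast_add_of_mem_wedge {y : ℤ × ℤ} (hy : y ∈ wedge) :
    ∃ b d : ℕ, y = ((b : ℤ) + d, (b : ℤ)) :=
  ⟨y.2.toNat, (y.1 - y.2).toNat, by obtain ⟨h2, h12⟩ := hy; ext <;> simp <;> omega⟩

end ReflectedWalk

section HitFormula

def hitFormula (r ρ₁ c : ℝ) (y : ℤ × ℤ) : ℝ :=
  r ^ (y.1 - y.2) + c * (ρ₁ ^ y.1 - r ^ (y.1 - y.2) * ρ₁ ^ y.2)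

variable {l1 m1 l2 m2 r ρ₁ c : ℝ}

lemma zpow_mul_zpow_harmonic {x z : ℝ} (hx : x ≠ 0) (hz : z ≠ 0)
    (h : l1 * x⁻¹ + m1 * x + l2 * z + m2 * z⁻¹ = 1) (a b : ℤ) :
    l1 * (x ^ (a - 1) * z ^ b) + m1 * (x ^ (a + 1) * z ^ b) + l2 * (x ^ a * z ^ (b + 1)) +
      m2 * (x ^ a * z ^ (b - 1)) = x ^ a * z ^ b := by
  simp only [zpow_sub_one₀ hx, zpow_add_one₀ hx, zpow_sub_one₀ hz, zpow_add_one₀ hz]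
  linear_combination (x ^ a * z ^ b) * h

lemma hitFormula_eq_zpow (hr : r ≠ 0) (a b : ℤ) :
    hitFormula r ρ₁ c (a, b) =
      r ^ a * r⁻¹ ^ b + c * (ρ₁ ^ a * 1 ^ b) - c * (r ^ a * (ρ₁ / r) ^ b) := by
  simp only [hitFormula, zpow_sub₀ hr, inv_zpow, div_zpow, one_zpow]
  ring

lemma hitFormula_harmonic (hr : r ≠ 0) (hρ₁ : ρ₁ ≠ 0) (hsum : l1 + l2 + m1 + m2 = 1)
    (hl1 : l1 = ρ₁ * m1) (hl12 : l1 + l2 = r * (m1 + m2)) (hl2 : l2 * ρ₁ = m2 * r ^ 2)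
    (a b : ℤ) :
    l1 * hitFormula r ρ₁ c (a - 1, b) + m1 * hitFormula r ρ₁ c (a + 1, b) +
      l2 * hitFormula r ρ₁ c (a, b + 1) + m2 * hitFormula r ρ₁ c (a, b - 1) =
      hitFormula r ρ₁ c (a, b) := by
  have e₁ : l1 * r⁻¹ + m1 * r + l2 * r⁻¹ + m2 * r⁻¹⁻¹ = 1 := by
    field_simp
    linear_combination (1 - r) * hl12 + r * hsum
  have e₂ : l1 * ρ₁⁻¹ + m1 * ρ₁ + l2 * 1 + m2 * 1⁻¹ = 1 := by
    field_simp
    linear_combination ρ₁ * hsum + (1 - ρ₁) * hl1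
  have e₃ : l1 * r⁻¹ + m1 * r + l2 * (ρ₁ / r) + m2 * (ρ₁ / r)⁻¹ = 1 := by
    field_simp
    linear_combination ρ₁ * (1 - r) * hl12 + ρ₁ * r * hsum + (ρ₁ - 1) * hl2
  simp only [hitFormula_eq_zpow hr]
  linear_combination zpow_mul_zpow_harmonic hr (inv_ne_zero hr) e₁ a b +
    c * zpow_mul_zpow_harmonic hρ₁ one_ne_zero e₂ a b -
    c * zpow_mul_zpow_harmonic hr (div_ne_zero hρ₁ hr) e₃ a b

lemma hitFormula_neg_one (hr : r ≠ 0) (hρ₁ : ρ₁ ≠ 0) (hc : c * (ρ₁ - r) = ρ₁ * (1 - r))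
    (a : ℤ) : hitFormula r ρ₁ c (a, -1) = hitFormula r ρ₁ c (a, 0) := by
  simp only [hitFormula, sub_neg_eq_add, sub_zero, zpow_add_one₀ hr, zpow_neg_one, zpow_zero]
  field_simp
  linear_combination (r ^ a) * hc

lemma hitFormula_reflStep_harmonic (hr : r ≠ 0) (hρ₁ : ρ₁ ≠ 0) (hsum : l1 + l2 + m1 + m2 = 1)
    (hl1 : l1 = ρ₁ * m1) (hl12 : l1 + l2 = r * (m1 + m2)) (hl2 : l2 * ρ₁ = m2 * r ^ 2)
    (hc : c * (ρ₁ - r) = ρ₁ * (1 - r)) {y : ℤ × ℤ} (hy : 0 ≤ y.2) :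
    ∑ v ∈ moves, moveWeight l1 m1 l2 m2 v * hitFormula r ρ₁ c (reflStep y v) =
      hitFormula r ρ₁ c y := by
  obtain ⟨a, b⟩ := y
  have hharm := hitFormula_harmonic (c := c) hr hρ₁ hsum hl1 hl12 hl2 a b
  rw [sum_moves_moveWeight_mul_reflStep _ hy]
  rcases hy.eq_or_lt with hb | hb
  · obtain rfl : b = 0 := hb.symm
    rw [zero_sub, hitFormula_neg_one hr hρ₁ hc a] at hharm
    simpa using hharm
  · rwa [max_eq_left (by omega : (0 : ℤ) ≤ b - 1)]

lemma hitFormula_of_fst_eq_snd {y : ℤ × ℤ} (hy : y.1 = y.2) : hitFormula r ρ₁ c y = 1 := by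
  simp [hitFormula, hy]

lemma hitFormula_natCast_add (hρ₁ : ρ₁ ≠ 0) (b d : ℕ) :
    hitFormula r ρ₁ c ((b : ℤ) + d, b) = r ^ d + c * ρ₁ ^ b * (ρ₁ ^ d - r ^ d) := by
  simp only [hitFormula, add_sub_cancel_left, zpow_add₀ hρ₁, zpow_natCast]
  ring

lemma hitFormula_nonneg (hr : 0 < r) (hrρ₁ : r ≤ ρ₁) (hc : 0 ≤ c) {y : ℤ × ℤ}
    (hy : y ∈ wedge) : 0 ≤ hitFormula r ρ₁ c y := by
  obtain ⟨b, d, rfl⟩ := exists_natCast_add_of_mem_wedge hy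
  rw [hitFormula_natCast_add (hr.trans_le hrρ₁).ne']
  have := pow_le_pow_left₀ hr.le hrρ₁ d
  have := pow_pos (hr.trans_le hrρ₁) b
  positivity

lemma hitFormula_le (hr : 0 < r) (hrρ₁ : r ≤ ρ₁) (hρ₁ : ρ₁ ≤ 1) (hc : 0 ≤ c) {y : ℤ × ℤ}
    (hy : y ∈ wedge) : hitFormula r ρ₁ c y ≤ (1 + c) * ρ₁ ^ (y.1 - y.2).toNat := by
  obtain ⟨b, d, rfl⟩ := exists_natCast_add_of_mem_wedge hy
  rw [hitFormula_natCast_add (hr.trans_le hrρ₁).ne', add_sub_cancel_left, Int.toNat_natCast]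
  have hrd := pow_le_pow_left₀ hr.le hrρ₁ d
  have hb : ρ₁ ^ b ≤ 1 := pow_le_one₀ (hr.le.trans hrρ₁) hρ₁
  have : c * ρ₁ ^ b * (ρ₁ ^ d - r ^ d) ≤ c * ρ₁ ^ d :=
    calc c * ρ₁ ^ b * (ρ₁ ^ d - r ^ d) ≤ c * 1 * (ρ₁ ^ d - 0) := by gcongr; positivity
      _ = c * ρ₁ ^ d := by ring
  linarith

lemma tendsto_hitProb_reflStep (hl1 : 0 < l1) (hm1 : 0 ≤ m1) (hl2 : 0 ≤ l2) (hm2 : 0 ≤ m2)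
    (hsum : l1 + l2 + m1 + m2 = 1) (hr : 0 < r) (hrρ₁ : r ≤ ρ₁) (hρ₁ : ρ₁ < 1) (hc0 : 0 ≤ c)
    (hl1ρ : l1 = ρ₁ * m1) (hl12 : l1 + l2 = r * (m1 + m2)) (hl2ρ : l2 * ρ₁ = m2 * r ^ 2)
    (hc : c * (ρ₁ - r) = ρ₁ * (1 - r)) {y : ℤ × ℤ} (hy : y ∈ wedge) :
    Tendsto (fun N => hitProb reflStep moves (moveWeight l1 m1 l2 m2) {z | z.1 = z.2} N y)
      atTop (𝓝 (hitFormula r ρ₁ c y)) :=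
  tendsto_hitProb (A := {z : ℤ × ℤ | z.1 = z.2}) (moveWeight_nonneg hl1.le hm1 hl2 hm2)
    (sum_moveWeight hsum) (fun _ ht hne => reflStep_mem_wedge ht hne) (v₀ := (1, 0))
    (by simp [moves]) (by simpa [moveWeight] using hl1)
    (fun _ ht hne => toNat_sub_reflStep_one_zero_lt ht hne)
    (fun _ => hitFormula_of_fst_eq_snd)
    (fun _ ht _ => hitFormula_reflStep_harmonic hr.ne' (hr.trans_le hrρ₁).ne' hsum hl1ρ hl12
      hl2ρ hc ht.1)
    (by linarith) (hr.le.trans hrρ₁) hρ₁ (fun _ => hitFormula_nonneg hr hrρ₁ hc0)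
    (fun _ => hitFormula_le hr hrρ₁ hρ₁.le hc0) hy

end HitFormula

theorem stmt17_general {Ω : Type} [MeasurableSpace Ω] (μ : Measure Ω)
    (l1 m1 l2 m2 : ℝ)
    (hl1 : 0 < l1) (hm1 : 0 < m1) (hl2 : 0 < l2) (hm2 : 0 < m2)
    (hsum : l1 + l2 + m1 + m2 = 1)
    (hρ1 : l1 / m1 < 1)
    (hord1 : l2 / m2 ≤ (l1 + l2) / (m1 + m2))
    (hneq : l1 / m1 ≠ l2 / m2)
    (hharm : (l1 / m1) * (l2 / m2) = ((l1 + l2) / (m1 + m2)) ^ 2)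
    (I : ℕ → Ω → ℤ × ℤ) (hI : IncrementsLaw l1 m1 l2 m2 μ I) :
    ∀ y : ℤ × ℤ, 0 ≤ y.2 → y.2 ≤ y.1 →
      (μ {ω | tauY y (fun k => I k ω) < ⊤}).toReal =
        ((l1 + l2) / (m1 + m2)) ^ (y.1 - y.2) +
          ((l1 + l2) / (m1 + m2) * (1 - (l1 + l2) / (m1 + m2)) /
              ((l1 + l2) / (m1 + m2) - l2 / m2)) *
            ((l1 / m1) ^ y.1 -
              ((l1 + l2) / (m1 + m2)) ^ (y.1 - y.2) * (l1 / m1) ^ y.2) := by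
  intro y hy2 hy12
  set r := (l1 + l2) / (m1 + m2)
  set ρ₁ := l1 / m1
  set ρ₂ := l2 / m2
  have hr : 0 < r := div_pos (by linarith) (by linarith)
  have hρ₂ : 0 < ρ₂ := div_pos hl2 hm2
  have hρ₂r : ρ₂ < r := hord1.lt_of_ne fun h => hneq <|
    mul_right_cancel₀ hρ₂.ne' (by rw [hharm, h, sq])
  have hrρ₁ : r < ρ₁ := by nlinarith
  have hl1ρ : l1 = ρ₁ * m1 := (div_mul_cancel₀ l1 hm1.ne').symm
  have hl12 : l1 + l2 = r * (m1 + m2) := (div_mul_cancel₀ _ (by positivity)).symm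
  have hl2ρ : l2 * ρ₁ = m2 * r ^ 2 := by
    rw [← hharm, ← div_mul_cancel₀ l2 hm2.ne']; ring
  have hc : r * (1 - r) / (r - ρ₂) * (ρ₁ - r) = ρ₁ * (1 - r) := by
    field_simp [(sub_pos.2 hρ₂r).ne']
    linear_combination (1 - r) * hharm
  have hc0 : 0 ≤ r * (1 - r) / (r - ρ₂) :=
    div_nonneg (mul_nonneg hr.le (by linarith)) (by linarith)
  have hlim := tendsto_hitProb_reflStep hl1 hm1.le hl2.le hm2.le hsum hr hrρ₁.le hρ1 hc0
    hl1ρ hl12 hl2ρ hc ⟨hy2, hy12⟩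
  simp only [tauY, hitTime_lt_top_iff, pathY_eq_walk]
  rw [measure_exists_walk_mem hI.1 hI.2.1 hI.measure_preimage_singleton
    (moveWeight_nonneg hl1.le hm1.le hl2.le hm2.le) (sum_moveWeight hsum) hlim,
    ENNReal.toReal_ofReal (hitFormula_nonneg hr hrρ₁.le hc0 ⟨hy2, hy12⟩)]
  rfl

theorem stmt17 {Ω : Type} [MeasurableSpace Ω] (μ : Measure Ω) [IsProbabilityMeasure μ]
    (l1 m1 l2 m2 : ℝ)
    (hl1 : 0 < l1) (hm1 : 0 < m1) (hl2 : 0 < l2) (hm2 : 0 < m2)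
    (hsum : l1 + l2 + m1 + m2 = 1)
    (hρ1 : l1 / m1 < 1) (hρ2 : l2 / m2 < 1)
    (hord1 : l2 / m2 ≤ (l1 + l2) / (m1 + m2))
    (hord2 : (l1 + l2) / (m1 + m2) ≤ l1 / m1)
    (hneq : l1 / m1 ≠ l2 / m2)
    (hr2 : ((l1 + l2) / (m1 + m2)) ^ 2 < l2 / m2)
    (hharm : (l1 / m1) * (l2 / m2) = ((l1 + l2) / (m1 + m2)) ^ 2)
    (I : ℕ → Ω → ℤ × ℤ) (hI : IncrementsLaw l1 m1 l2 m2 μ I) :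
    ∀ y : ℤ × ℤ, 0 ≤ y.2 → y.2 ≤ y.1 →
      (μ {ω | tauY y (fun k => I k ω) < ⊤}).toReal =
        ((l1 + l2) / (m1 + m2)) ^ (y.1 - y.2) +
          ((l1 + l2) / (m1 + m2) * (1 - (l1 + l2) / (m1 + m2)) /
              ((l1 + l2) / (m1 + m2) - l2 / m2)) *
            ((l1 / m1) ^ y.1 -
              ((l1 + l2) / (m1 + m2)) ^ (y.1 - y.2) * (l1 / m1) ^ y.2) :=
  stmt17_general μ l1 m1 l2 m2 hl1 hm1 hl2 hm2 hsum hρ1 hord1 hneq hharm I hI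
end
end

section
/- There exists R ∈ (0,1) such that for every α ∈ ℂ with R < |α| ≤ 1, both |β1(α)| < 1 and |β1(α)²/(α·ρ2)| < 1 hold, where Δ(α) = 1 − 4·(μ2/α + μ1)·(λ1 + λ2·α) and β1(α) = (1 − √(Δ(α))) / (2·(μ2/α + μ1)), with √ denoting the complex square root with nonnegative real part. -/
noncomputable section

/-- `Δ(α) = 1 − 4·(μ2/α + μ1)·(λ1 + λ2·α)`. -/
def Dscr (l1 m1 l2 m2 : ℝ) (α : ℂ) : ℂ :=
  1 - 4 * ((m2 : ℂ) / α + (m1 : ℂ)) * ((l1 : ℂ) + (l2 : ℂ) * α)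

/-- `β₁(α) = (1 − √Δ(α)) / (2·(μ2/α + μ1))`, where `√` is the square root
with nonnegative real part (the principal complex power `z ^ (1/2)`). -/
def beta1 (l1 m1 l2 m2 : ℝ) (α : ℂ) : ℂ :=
  (1 - Dscr l1 m1 l2 m2 α ^ (1 / 2 : ℂ)) / (2 * ((m2 : ℂ) / α + (m1 : ℂ)))

/-!
Write `β₁(α) = (1 - √(1 - 4ab)) / (2a)` with `a = μ2/α + μ1` and `b = λ1 + λ2 α`, and rationalize it
to `2b / (1 + √(1 - 4ab))`. Since the square root has nonnegative real part, `Re √(1 - 4ab)` is at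
least `√(1 - 4|a||b|)`, so on the annulus `R ≤ |α| ≤ 1` the modulus of `β₁` is at most the smaller
root of `M s² - s + λ` for `M = μ2/R + μ1`, `λ = λ1 + λ2`. At `R = 1` that root is `r = λ/μ`, which
satisfies `r < 1` and `r² < ρ2`; both strict inequalities persist for `R` slightly below `1`.
-/

open Complex Filter Topology

lemma Complex.re_cpow_one_half_nonneg (z : ℂ) : 0 ≤ (z ^ (1 / 2 : ℂ)).re := by
  rcases eq_or_ne z 0 with rfl | hz
  · simp
  rw [cpow_def_of_ne_zero hz, exp_re]
  refine mul_nonneg (Real.exp_nonneg _) (Real.cos_nonneg_of_mem_Icc ?_)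
  have him : (log z * (1 / 2 : ℂ)).im = z.arg / 2 := by
    simp [mul_im, log_im]
    ring
  rw [him]
  constructor <;> linarith [neg_pi_lt_arg z, arg_le_pi z]

lemma Complex.sqrt_re_sq_le_re {w : ℂ} (hw : 0 ≤ w.re) : √((w ^ 2).re) ≤ w.re :=
  calc √((w ^ 2).re) ≤ √(w.re ^ 2) :=
        Real.sqrt_le_sqrt (by rw [sq, mul_re]; nlinarith [sq_nonneg w.im])
    _ = w.re := Real.sqrt_sq hw

/-- For `4 M lam ≤ 1`, the smaller root of `M s² - s + lam`, in rationalized form. -/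
def smallRoot (M lam : ℝ) : ℝ := 2 * lam / (1 + √(1 - 4 * M * lam))

lemma continuous_smallRoot (lam : ℝ) : Continuous fun M ↦ smallRoot M lam :=
  continuous_const.div (by fun_prop) fun _ ↦ by positivity

lemma smallRoot_eq_div {lam mu : ℝ} (hsum : lam + mu = 1) (hle : lam ≤ mu) :
    smallRoot mu lam = lam / mu := by
  have hdisc : 1 - 4 * mu * lam = (mu - lam) ^ 2 := by linear_combination (-(lam + mu + 1)) * hsum
  have hmu : mu ≠ 0 := by linarith
  rw [smallRoot, hdisc, Real.sqrt_sq (by linarith), show 1 + (mu - lam) = 2 * mu by linarith,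
    mul_div_mul_left _ _ two_ne_zero]

lemma norm_small_branch_le_smallRoot {a b : ℂ} {M lam : ℝ} (ha : ‖a‖ ≤ M) (hb : ‖b‖ ≤ lam) :
    ‖(1 - (1 - 4 * a * b) ^ (1 / 2 : ℂ)) / (2 * a)‖ ≤ smallRoot M lam := by
  have hlam : 0 ≤ lam := (norm_nonneg b).trans hb
  rcases eq_or_ne a 0 with rfl | ha0
  · simp only [mul_zero, div_zero, norm_zero, smallRoot]
    positivity
  set w := (1 - 4 * a * b) ^ (1 / 2 : ℂ)
  have hw_sq : w ^ 2 = 1 - 4 * a * b := by simp [w]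
  have hab : (4 * a * b).re ≤ 4 * M * lam := by
    refine (re_le_norm _).trans ?_
    rw [norm_mul, norm_mul, RCLike.norm_ofNat, mul_assoc, mul_assoc]
    exact mul_le_mul_of_nonneg_left (mul_le_mul ha hb (norm_nonneg _) ((norm_nonneg _).trans ha))
      zero_le_four
  have hw_re : √(1 - 4 * M * lam) ≤ w.re :=
    calc √(1 - 4 * M * lam) ≤ √((w ^ 2).re) :=
          Real.sqrt_le_sqrt (by rw [hw_sq, sub_re, one_re]; linarith)
      _ ≤ w.re := sqrt_re_sq_le_re (re_cpow_one_half_nonneg _)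
  have hden : 1 + √(1 - 4 * M * lam) ≤ ‖1 + w‖ :=
    le_trans (by rw [add_re, one_re]; linarith) (re_le_norm _)
  have hden_pos : 0 < ‖1 + w‖ := lt_of_lt_of_le (by positivity) hden
  have hrat : (1 - w) / (2 * a) = 2 * b / (1 + w) := by
    rw [div_eq_div_iff (mul_ne_zero two_ne_zero ha0) (norm_pos_iff.1 hden_pos)]
    linear_combination (-1 : ℂ) * hw_sq
  rw [hrat, norm_div, norm_mul, RCLike.norm_ofNat, smallRoot]
  gcongr

lemma norm_beta1_le {l1 m1 l2 m2 R : ℝ} (hl1 : 0 ≤ l1) (hm1 : 0 ≤ m1) (hl2 : 0 ≤ l2)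
    (hm2 : 0 ≤ m2) (hR : 0 < R) {α : ℂ} (hRα : R ≤ ‖α‖) (hα : ‖α‖ ≤ 1) :
    ‖beta1 l1 m1 l2 m2 α‖ ≤ smallRoot (m2 / R + m1) (l1 + l2) := by
  have ha : ‖(m2 : ℂ) / α + m1‖ ≤ m2 / R + m1 := by
    refine (norm_add_le _ _).trans ?_
    rw [norm_div, norm_real, norm_real, Real.norm_of_nonneg hm2, Real.norm_of_nonneg hm1]
    gcongr
  have hb : ‖(l1 : ℂ) + l2 * α‖ ≤ l1 + l2 := by
    refine (norm_add_le _ _).trans ?_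
    rw [norm_mul, norm_real, norm_real, Real.norm_of_nonneg hl2, Real.norm_of_nonneg hl1]
    gcongr
    exact mul_le_of_le_one_right hl2 hα
  exact norm_small_branch_le_smallRoot ha hb

lemma exists_radius_smallRoot_lt {l1 m1 l2 m2 : ℝ} (hmu : 0 < m1 + m2)
    (hsum : l1 + l2 + m1 + m2 = 1) (hr : (l1 + l2) / (m1 + m2) < 1)
    (hr2 : ((l1 + l2) / (m1 + m2)) ^ 2 < l2 / m2) :
    ∃ R : ℝ, 0 < R ∧ R < 1 ∧ smallRoot (m2 / R + m1) (l1 + l2) < 1 ∧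
      smallRoot (m2 / R + m1) (l1 + l2) ^ 2 < R * (l2 / m2) := by
  have hlt : l1 + l2 < m1 + m2 := (div_lt_one hmu).1 hr
  have hM : ContinuousAt (fun R : ℝ ↦ m2 / R + m1) 1 := by fun_prop (disch := norm_num)
  have hS : ContinuousAt (fun R : ℝ ↦ smallRoot (m2 / R + m1) (l1 + l2)) 1 :=
    (continuous_smallRoot _).continuousAt.comp hM
  have hS1 : smallRoot (m2 / 1 + m1) (l1 + l2) = (l1 + l2) / (m1 + m2) := by
    rw [div_one, add_comm m2]
    exact smallRoot_eq_div (by linarith) hlt.le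
  have hroot : ∀ᶠ R in 𝓝 (1 : ℝ), smallRoot (m2 / R + m1) (l1 + l2) < 1 :=
    hS.eventually_lt continuousAt_const (by rwa [hS1])
  have hS_sq : ContinuousAt (fun R : ℝ ↦ smallRoot (m2 / R + m1) (l1 + l2) ^ 2) 1 := hS.pow 2
  have hroot_sq : ∀ᶠ R in 𝓝 (1 : ℝ), smallRoot (m2 / R + m1) (l1 + l2) ^ 2 < R * (l2 / m2) :=
    hS_sq.eventually_lt (by fun_prop) (by rwa [hS1, one_mul])
  obtain ⟨R, ⟨⟨hR, hR_sq⟩, hR0⟩, hR1⟩ :=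
    (eventually_nhdsWithin_of_eventually_nhds
      ((hroot.and hroot_sq).and (eventually_gt_nhds one_pos))).and
      (self_mem_nhdsWithin : ∀ᶠ R in 𝓝[<] (1 : ℝ), R < 1) |>.exists
  exact ⟨R, hR0, hR1, hR, hR_sq⟩

theorem stmt19_general (l1 m1 l2 m2 : ℝ)
    (hl1 : 0 < l1) (hm1 : 0 < m1) (hl2 : 0 < l2) (hm2 : 0 < m2)
    (hsum : l1 + l2 + m1 + m2 = 1)
    (hρ2 : l2 / m2 < 1)
    (hr2 : ((l1 + l2) / (m1 + m2)) ^ 2 < l2 / m2) :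
    ∃ R : ℝ, 0 < R ∧ R < 1 ∧ ∀ α : ℂ, R < ‖α‖ → ‖α‖ ≤ 1 →
      ‖beta1 l1 m1 l2 m2 α‖ < 1 ∧
      ‖beta1 l1 m1 l2 m2 α ^ 2 / (α * ((l2 / m2 : ℝ) : ℂ))‖ < 1 := by
  have hr : (l1 + l2) / (m1 + m2) < 1 :=
    (pow_lt_one_iff_of_nonneg (by positivity) two_ne_zero).1 (hr2.trans hρ2)
  obtain ⟨R, hR0, hR1, hroot, hroot_sq⟩ :=
    exists_radius_smallRoot_lt (by positivity) hsum hr hr2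
  refine ⟨R, hR0, hR1, fun α hRα hα ↦ ?_⟩
  have hβ := norm_beta1_le hl1.le hm1.le hl2.le hm2.le hR0 hRα.le hα
  have hρ2_pos : 0 < l2 / m2 := by positivity
  refine ⟨hβ.trans_lt hroot, ?_⟩
  rw [norm_div, norm_pow, norm_mul, norm_real, Real.norm_of_nonneg hρ2_pos.le,
    div_lt_one (mul_pos (hR0.trans hRα) hρ2_pos)]
  calc ‖beta1 l1 m1 l2 m2 α‖ ^ 2 ≤ smallRoot (m2 / R + m1) (l1 + l2) ^ 2 := by gcongr
    _ < R * (l2 / m2) := hroot_sq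
    _ ≤ ‖α‖ * (l2 / m2) := by gcongr

theorem stmt19 (l1 m1 l2 m2 : ℝ)
    (hl1 : 0 < l1) (hm1 : 0 < m1) (hl2 : 0 < l2) (hm2 : 0 < m2)
    (hsum : l1 + l2 + m1 + m2 = 1)
    (hρ1 : l1 / m1 < 1) (hρ2 : l2 / m2 < 1)
    (hord1 : l2 / m2 ≤ (l1 + l2) / (m1 + m2))
    (hord2 : (l1 + l2) / (m1 + m2) ≤ l1 / m1)
    (hneq : l1 / m1 ≠ l2 / m2)
    (hr2 : ((l1 + l2) / (m1 + m2)) ^ 2 < l2 / m2) :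
    ∃ R : ℝ, 0 < R ∧ R < 1 ∧ ∀ α : ℂ, R < ‖α‖ → ‖α‖ ≤ 1 →
      ‖beta1 l1 m1 l2 m2 α‖ < 1 ∧
      ‖beta1 l1 m1 l2 m2 α ^ 2 / (α * ((l2 / m2 : ℝ) : ℂ))‖ < 1 :=
  stmt19_general l1 m1 l2 m2 hl1 hm1 hl2 hm2 hsum hρ2 hr2
end
end
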